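/- arXiv:2601.07608 — 7 statements merged into one kernel-verified Lean document; each statement's English description precedes it below -/
import Mathlib

section
/- Let (p_k), (q_k), (α_k) be real sequences such that 0 < q_k ≤ 1 for all k, ∑_{k=1}^∞ q_k = ∞, α_k ≥ 0 for all k, lim_{k→∞} α_k/q_k = 0, and p_{k+1} ≤ (1 − q_k) p_k + α_k for all k. Then limsup_{k→∞} p_k ≤ 0. In particular, if in addition p_k ≥ 0 for all k, then lim_{k→∞} p_k = 0. -/
open Filter

/-- Robbins–Siegmund-type lemma (Polyak). -/
theorem stmt_0 (p q α : ℕ → ℝ)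
    (hq : ∀ k, 1 ≤ k → 0 < q k ∧ q k ≤ 1)
    (hqsum : Tendsto (fun n => ∑ k ∈ Finset.Icc 1 n, q k) atTop atTop)
    (hα : ∀ k, 1 ≤ k → 0 ≤ α k)
    (hratio : Tendsto (fun k => α k / q k) atTop (nhds 0))
    (hrec : ∀ k, 1 ≤ k → p (k + 1) ≤ (1 - q k) * p k + α k) :
    limsup p atTop ≤ 0 ∧
      ((∀ k, 1 ≤ k → 0 ≤ p k) → Tendsto p atTop (nhds 0)) := by
  have key : ∀ ε : ℝ, 0 < ε → ∀ᶠ n in atTop, p n ≤ ε := by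
    intro ε hε
    have h2 : (0:ℝ) < ε/2 := by linarith
    obtain ⟨N0, hN0⟩ := Metric.tendsto_atTop.mp hratio (ε/2) h2
    set N := max N0 1 with hNdef
    have hN1 : 1 ≤ N := le_max_right _ _
    have hαq : ∀ k, N ≤ k → α k ≤ (ε/2) * q k := by
      intro k hk
      have hk1 : 1 ≤ k := le_trans hN1 hk
      have hq' := hq k hk1
      have hd := hN0 k (le_trans (le_max_left _ _) hk)
      rw [Real.dist_eq, sub_zero] at hd
      have hle : α k / q k ≤ ε/2 := le_of_lt (lt_of_abs_lt hd)
      have hne : q k ≠ 0 := ne_of_gt hq'.1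
      calc α k = (α k / q k) * q k := by field_simp
        _ ≤ (ε/2) * q k := by nlinarith [hq'.1]
    set M := max (p N - ε/2) 0 with hMdef
    have hM0 : 0 ≤ M := le_max_right _ _
    set P := fun n => ∏ k ∈ Finset.Ico N n, (1 - q k) with hPdef
    have hfacnn : ∀ k, 1 ≤ k → 0 ≤ 1 - q k := fun k hk => by linarith [(hq k hk).2]
    have hPnn : ∀ n, 0 ≤ P n := by
      intro n
      apply Finset.prod_nonneg
      intro k hk
      exact hfacnn k (le_trans hN1 (Finset.mem_Ico.mp hk).1)
    have main : ∀ n, N ≤ n → p n ≤ ε/2 + P n * M := by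
      intro n hn
      induction n with
      | zero => omega
      | succ m ih =>
        rcases Nat.lt_or_ge N (m+1) with h | h
        · have hm : N ≤ m := by omega
          have hm1 : 1 ≤ m := le_trans hN1 hm
          have ihm := ih hm
          have hrecm := hrec m hm1
          have hqm := hq m hm1
          have hP' : P (m+1) = P m * (1 - q m) := Finset.prod_Ico_succ_top hm _
          have hαm := hαq m hm
          have hPm := hPnn m
          rw [hP']
          nlinarith
        · have hNe : N = m + 1 := by omega
          have hPN : P (m+1) = 1 := by
            rw [hPdef]; simp [← hNe, Finset.Ico_self]
          rw [hPN, ← hNe]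
          have : p N - ε/2 ≤ M := le_max_left _ _
          linarith
    -- the product tends to 0
    have hS : Tendsto (fun n => ∑ k ∈ Finset.Ico N n, q k) atTop atTop := by
      have hcomp : Tendsto (fun n : ℕ => (∑ k ∈ Finset.Icc 1 (n-1), q k)
          - ∑ k ∈ Finset.Icc 1 (N-1), q k) atTop atTop := by
        apply tendsto_atTop_add_const_right
        exact hqsum.comp (tendsto_sub_atTop_nat 1)
      apply hcomp.congr'
      filter_upwards [eventually_ge_atTop N] with n hn
      have h1n : 1 ≤ n := le_trans hN1 hn
      have hIoc : ∀ m : ℕ, Finset.Icc 1 m = Finset.Ioc 0 m := by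
        intro m; rw [← Finset.Icc_add_one_left_eq_Ioc, zero_add]
      have hIco : Finset.Ico N n = Finset.Ioc (N-1) (n-1) := by
        ext x
        simp only [Finset.mem_Ico, Finset.mem_Ioc]
        omega
      have hsplit := Finset.sum_Ioc_consecutive (f := q)
        (Nat.zero_le (N-1)) (by omega : N - 1 ≤ n - 1)
      rw [hIoc, hIoc, hIco]
      linarith [hsplit]
    have hPlim : Tendsto P atTop (nhds 0) := by
      have hbound : ∀ n, P n ≤ Real.exp (-(∑ k ∈ Finset.Ico N n, q k)) := by
        intro n
        rw [← Finset.sum_neg_distrib, Real.exp_sum]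
        apply Finset.prod_le_prod
        · intro k hk
          exact hfacnn k (le_trans hN1 (Finset.mem_Ico.mp hk).1)
        · intro k _
          have := Real.add_one_le_exp (-q k)
          linarith
      have hexp : Tendsto (fun n => Real.exp (-(∑ k ∈ Finset.Ico N n, q k)))
          atTop (nhds 0) :=
        Real.tendsto_exp_atBot.comp (tendsto_neg_atTop_atBot.comp hS)
      exact squeeze_zero hPnn hbound hexp
    have hPM : Tendsto (fun n => P n * M) atTop (nhds 0) := by
      simpa using hPlim.mul_const M
    have hPMev : ∀ᶠ n in atTop, P n * M < ε/2 :=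
      hPM.eventually_lt_const h2
    filter_upwards [eventually_ge_atTop N, hPMev] with n hn hpm
    have := main n hn
    linarith
  constructor
  · rw [limsup_eq]
    by_cases hb : BddBelow {a | ∀ᶠ n in atTop, p n ≤ a}
    · apply le_of_forall_pos_le_add
      intro ε hε
      simpa using csInf_le hb (key ε hε)
    · rw [Real.sInf_of_not_bddBelow hb]
  · intro hpos
    rw [Metric.tendsto_atTop]
    intro ε hε
    obtain ⟨N, hN⟩ := eventually_atTop.mp (key (ε/2) (by linarith))
    refine ⟨max N 1, fun n hn => ?_⟩
    have h1 : p n ≤ ε/2 := hN n (le_trans (le_max_left _ _) hn)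
    have h2 : 0 ≤ p n := hpos n (le_trans (le_max_right _ _) hn)
    rw [Real.dist_eq, sub_zero, abs_of_nonneg h2]
    linarith
end

section
/- Let a > 0, k₀ ≥ 0 and b ∈ (0,1). Then there exists L₀ such that for all integers l ≥ L₀ and all integers k ≥ l, the product ∏_{i=l}^{k} (1 − a/(i + k₀)^b) satisfies ∏_{i=l}^{k} (1 − a/(i + k₀)^b) ≤ exp( (a/(1−b)) · ((l + k₀)^{1−b} − (k + k₀ + 1)^{1−b}) ). -/
open Real Finset Set

lemma step_ineq (b : ℝ) (hb0 : 0 < b) (hb1 : b < 1) (x : ℝ) (hx : 0 < x) :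
    (x + 1) ^ (1 - b) - x ^ (1 - b) ≤ (1 - b) * x ^ (-b) := by
  obtain ⟨c, hc, hderiv⟩ := exists_hasDerivAt_eq_slope (fun y : ℝ => y ^ (1 - b))
      (fun y => (1 - b) * y ^ (1 - b - 1)) (by linarith : x < x + 1)
      (ContinuousOn.rpow_const continuousOn_id (fun y _ => Or.inr (by linarith)))
      (fun y hy => Real.hasDerivAt_rpow_const (Or.inl (by have := hy.1; dsimp at *; nlinarith)))
  have hc0 : 0 < c := lt_trans hx hc.1
  have h1 : (x+1)^(1-b) - x^(1-b) = (1-b) * c ^ (-b) := by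
    rw [show (1:ℝ) - b - 1 = -b by ring] at hderiv
    rw [hderiv]; field_simp; ring
  rw [h1]
  have : c ^ (-b) ≤ x ^ (-b) := by
    apply Real.rpow_le_rpow_of_nonpos hx (le_of_lt hc.1) (by linarith)
  nlinarith

lemma sum_ineq (b k₀ : ℝ) (hb0 : 0 < b) (hb1 : b < 1) (hk₀ : 0 ≤ k₀)
    (l : ℕ) (hl : 1 ≤ l) : ∀ k : ℕ, l ≤ k →
    ((k : ℝ) + 1 + k₀) ^ (1 - b) - ((l : ℝ) + k₀) ^ (1 - b) ≤
      ∑ i ∈ Finset.Icc l k, (1 - b) * ((i : ℝ) + k₀) ^ (-b) := by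
  have hpos : ∀ i : ℕ, l ≤ i → (0:ℝ) < (i:ℝ) + k₀ := by
    intro i hi
    have : (1:ℝ) ≤ (i:ℝ) := by exact_mod_cast le_trans hl hi
    linarith
  intro k hlk
  induction k, hlk using Nat.le_induction with
  | base =>
      rw [Finset.Icc_self, Finset.sum_singleton]
      have := step_ineq b hb0 hb1 ((l:ℝ) + k₀) (hpos l le_rfl)
      have heq : (l:ℝ) + k₀ + 1 = (l:ℝ) + 1 + k₀ := by ring
      linarith [this, heq ▸ this]
  | succ k hk ih =>
      rw [Finset.sum_Icc_succ_top (by omega : l ≤ k + 1)]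
      have h2 := step_ineq b hb0 hb1 ((k:ℝ) + 1 + k₀) (by
        have := hpos k (by omega); linarith)
      push_cast
      have heq : (k:ℝ) + 1 + k₀ + 1 = (k:ℝ) + 1 + 1 + k₀ := by ring
      rw [heq] at h2
      have ih' := ih
      push_cast at ih'
      linarith


/-- product bound, case b ∈ (0,1). -/
theorem stmt_2 (a k₀ b : ℝ) (ha : 0 < a) (hk₀ : 0 ≤ k₀) (hb : b ∈ Set.Ioo (0 : ℝ) 1) :
    ∃ L₀ : ℕ, ∀ l : ℕ, L₀ ≤ l → ∀ k : ℕ, l ≤ k →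
      ∏ i ∈ Finset.Icc l k, (1 - a / ((i : ℝ) + k₀) ^ b) ≤
        Real.exp ((a / (1 - b)) *
          (((l : ℝ) + k₀) ^ (1 - b) - ((k : ℝ) + k₀ + 1) ^ (1 - b))) := by
  obtain ⟨hb0, hb1⟩ := hb
  refine ⟨⌈a ^ (1/b)⌉₊ + 1, fun l hl k hlk => ?_⟩
  have hl1 : 1 ≤ l := by omega
  have hpos : ∀ i : ℕ, l ≤ i → (0:ℝ) < (i:ℝ) + k₀ := fun i hi => by
    have : (1:ℝ) ≤ (i:ℝ) := by exact_mod_cast le_trans hl1 hi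
    linarith
  have hle : ∀ i : ℕ, l ≤ i → a ≤ ((i:ℝ) + k₀) ^ b := by
    intro i hi
    have h1 : a ^ (1/b) ≤ (i:ℝ) + k₀ := by
      have := Nat.le_ceil (a ^ (1/b))
      have h2 : (⌈a ^ (1/b)⌉₊ : ℝ) ≤ (i:ℝ) := by exact_mod_cast by omega
      linarith
    calc a = (a ^ (1/b)) ^ b := by
            rw [← Real.rpow_mul ha.le, one_div_mul_cancel hb0.ne', Real.rpow_one]
      _ ≤ ((i:ℝ) + k₀) ^ b := Real.rpow_le_rpow (Real.rpow_nonneg ha.le _) h1 hb0.le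
  have hpb : ∀ i : ℕ, l ≤ i → (0:ℝ) < ((i:ℝ) + k₀) ^ b :=
    fun i hi => Real.rpow_pos_of_pos (hpos i hi) b
  calc ∏ i ∈ Finset.Icc l k, (1 - a / ((i : ℝ) + k₀) ^ b)
      ≤ ∏ i ∈ Finset.Icc l k, Real.exp (-(a / ((i : ℝ) + k₀) ^ b)) := by
        apply Finset.prod_le_prod
        · intro i hi
          rw [Finset.mem_Icc] at hi
          have := (div_le_one (hpb i hi.1)).mpr (hle i hi.1)
          linarith
        · intro i hi
          have := Real.add_one_le_exp (-(a / ((i : ℝ) + k₀) ^ b))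
          linarith
    _ = Real.exp (∑ i ∈ Finset.Icc l k, -(a / ((i : ℝ) + k₀) ^ b)) :=
        (Real.exp_sum _ _).symm
    _ ≤ Real.exp ((a / (1 - b)) *
          (((l : ℝ) + k₀) ^ (1 - b) - ((k : ℝ) + k₀ + 1) ^ (1 - b))) := by
        apply Real.exp_le_exp.mpr
        have hsum := sum_ineq b k₀ hb0 hb1 hk₀ l hl1 k hlk
        have hrw : ∀ i : ℕ, l ≤ i →
            -(a / ((i : ℝ) + k₀) ^ b) = -(a/(1-b)) * ((1 - b) * ((i : ℝ) + k₀) ^ (-b)) := by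
          intro i hi
          rw [Real.rpow_neg (hpos i hi).le, div_eq_mul_inv]
          have h1b : (1:ℝ) - b ≠ 0 := by linarith
          rw [show -(a/(1-b)) * ((1-b) * (((i:ℝ) + k₀)^b)⁻¹)
              = -((a/(1-b)*(1-b)) * (((i:ℝ) + k₀)^b)⁻¹) from by ring,
            div_mul_cancel₀ a h1b]
        rw [Finset.sum_congr rfl (fun i hi => hrw i (Finset.mem_Icc.mp hi).1),
          ← Finset.mul_sum]
        have hmul := mul_le_mul_of_nonneg_left hsum
          (div_nonneg ha.le (by linarith) : (0:ℝ) ≤ a/(1-b))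
        have hk' : ((k : ℝ) + k₀ + 1) = (k:ℝ) + 1 + k₀ := by ring
        rw [hk']
        nlinarith [hmul]
end

section
/- Let (h_k) be a positive, monotonically increasing real sequence with ln h_k = o(ln k). Let a₁ > 0, a₂ ≥ 0, χ > 0 be real numbers and let p be a positive integer with p·a₁ < χ. Then the sequence S_k := ∑_{l=1}^{k} ( ∏_{i=l+1}^{k} (1 − a₁/(i + a₂))^p ) · h_l / l^{1+χ} satisfies S_k = O(1/k^{p a₁}), i.e., there exist C > 0 and K such that S_k ≤ C / k^{p a₁} for all k ≥ K. -/
open Filter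

lemma aux_log_sum (a₂ : ℝ) (ha₂ : 0 ≤ a₂) (l : ℕ) :
    ∀ k, l ≤ k → Real.log ((k:ℝ)+1+a₂) - Real.log ((l:ℝ)+1+a₂) ≤
      ∑ i ∈ Finset.Icc (l+1) k, 1/((i:ℝ)+a₂) := by
  intro k hk
  induction k, hk using Nat.le_induction with
  | base => rw [Finset.Icc_eq_empty (by omega)]; simp
  | succ k hk ih =>
      rw [Finset.sum_Icc_succ_top (by omega)]
      have hx : (0:ℝ) < (k:ℝ)+1+a₂ := by positivity
      have h1 : Real.log (((k+1:ℕ):ℝ)+1+a₂) - Real.log ((k:ℝ)+1+a₂) ≤ 1/(((k+1:ℕ):ℝ)+a₂) := by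
        push_cast
        have h2 : Real.log (((k:ℝ)+1+a₂+1)/((k:ℝ)+1+a₂)) ≤ ((k:ℝ)+1+a₂+1)/((k:ℝ)+1+a₂) - 1 :=
          Real.log_le_sub_one_of_pos (by positivity)
        rw [Real.log_div (by positivity) (by positivity)] at h2
        rw [div_sub_one (ne_of_gt hx)] at h2
        have : ((k:ℝ)+1+a₂+1) - ((k:ℝ)+1+a₂) = 1 := by ring
        rw [this] at h2
        have heq : (k:ℝ)+1+1+a₂ = (k:ℝ)+1+a₂+1 := by ring
        rw [heq]
        linarith [h2]
      linarith [ih, h1]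


lemma aux_factor (a₁ a₂ : ℝ) (ha₁ : 0 < a₁) (ha₂ : 0 ≤ a₂) (i : ℕ) (hi : 1 ≤ i) :
    |1 - a₁/((i:ℝ)+a₂)| ≤
      (if i ≤ ⌈a₁⌉₊ then (1+a₁)*Real.exp a₁ else 1) * Real.exp (-(a₁/((i:ℝ)+a₂))) := by
  have hi1 : (1:ℝ) ≤ (i:ℝ) := by exact_mod_cast hi
  have hd : (1:ℝ) ≤ (i:ℝ)+a₂ := by linarith
  have hd0 : (0:ℝ) < (i:ℝ)+a₂ := by linarith
  set t := a₁/((i:ℝ)+a₂) with ht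
  have ht0 : 0 ≤ t := by positivity
  have hta : t ≤ a₁ := by
    rw [ht, div_le_iff₀ hd0]; nlinarith
  split_ifs with hcase
  · have h1 : Real.exp a₁ * Real.exp (-t) = Real.exp (a₁ - t) := by
      rw [← Real.exp_add]; ring_nf
    have h2 : (1:ℝ) ≤ Real.exp (a₁ - t) := Real.one_le_exp (by linarith)
    rw [abs_le]
    constructor
    · nlinarith
    · nlinarith
  · have hceil : a₁ ≤ (⌈a₁⌉₊ : ℝ) := Nat.le_ceil a₁
    have hgt : (⌈a₁⌉₊ : ℝ) + 1 ≤ (i:ℝ) := by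
      have : ⌈a₁⌉₊ + 1 ≤ i := by omega
      exact_mod_cast this
    have ht1 : t < 1 := by
      rw [ht, div_lt_one hd0]; linarith
    rw [one_mul, abs_of_nonneg (by linarith)]
    have := Real.add_one_le_exp (-t)
    linarith


lemma aux_prod (a₁ a₂ : ℝ) (ha₁ : 0 < a₁) (ha₂ : 0 ≤ a₂) (l k : ℕ) (hl : 1 ≤ l) (hlk : l ≤ k) :
    |∏ i ∈ Finset.Icc (l+1) k, (1 - a₁/((i:ℝ)+a₂))| ≤
      ((1+a₁)*Real.exp a₁)^(⌈a₁⌉₊+1) *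
        Real.exp (-a₁ * (Real.log ((k:ℝ)+1+a₂) - Real.log ((l:ℝ)+1+a₂))) := by
  set C : ℝ := (1+a₁)*Real.exp a₁ with hC
  have hC1 : (1:ℝ) ≤ C := by
    have := Real.one_le_exp (le_of_lt ha₁)
    nlinarith
  set g : ℕ → ℝ := fun i => if i ≤ ⌈a₁⌉₊ then C else 1 with hg
  have hg1 : ∀ i, 1 ≤ g i := by
    intro i; simp only [hg]; split_ifs <;> simp [hC1]
  rw [Finset.abs_prod]
  have step1 : ∏ i ∈ Finset.Icc (l+1) k, |1 - a₁/((i:ℝ)+a₂)| ≤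
      ∏ i ∈ Finset.Icc (l+1) k, g i * Real.exp (-(a₁/((i:ℝ)+a₂))) := by
    apply Finset.prod_le_prod
    · intro i _; exact abs_nonneg _
    · intro i hi
      have : 1 ≤ i := by
        simp only [Finset.mem_Icc] at hi; omega
      exact aux_factor a₁ a₂ ha₁ ha₂ i this
  rw [Finset.prod_mul_distrib] at step1
  have hprodg : ∏ i ∈ Finset.Icc (l+1) k, g i ≤ C^(⌈a₁⌉₊+1) := by
    have heq : ∏ i ∈ Finset.Icc (l+1) k, g i
        = ∏ i ∈ (Finset.Icc (l+1) k ∩ Finset.Icc 0 ⌈a₁⌉₊), g i := by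
      symm
      apply Finset.prod_subset (Finset.inter_subset_left)
      intro x hx hnx
      simp only [Finset.mem_inter, Finset.mem_Icc] at hx hnx
      have : ¬ x ≤ ⌈a₁⌉₊ := by omega
      simp [hg, this]
    rw [heq]
    have hcard : (Finset.Icc (l+1) k ∩ Finset.Icc 0 ⌈a₁⌉₊).card ≤ ⌈a₁⌉₊ + 1 := by
      calc (Finset.Icc (l+1) k ∩ Finset.Icc 0 ⌈a₁⌉₊).card
          ≤ (Finset.Icc 0 ⌈a₁⌉₊).card := Finset.card_le_card Finset.inter_subset_right
        _ = ⌈a₁⌉₊ + 1 := by rw [Nat.card_Icc]; omega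
    calc ∏ i ∈ (Finset.Icc (l+1) k ∩ Finset.Icc 0 ⌈a₁⌉₊), g i
        ≤ ∏ _i ∈ (Finset.Icc (l+1) k ∩ Finset.Icc 0 ⌈a₁⌉₊), C := by
          apply Finset.prod_le_prod
          · intro i _; linarith [hg1 i]
          · intro i hi
            simp only [Finset.mem_inter, Finset.mem_Icc] at hi
            simp [hg, hi.2.2]
      _ = C ^ (Finset.Icc (l+1) k ∩ Finset.Icc 0 ⌈a₁⌉₊).card := by rw [Finset.prod_const]
      _ ≤ C ^ (⌈a₁⌉₊+1) := pow_le_pow_right₀ (by linarith) hcard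
  have hprode : ∏ i ∈ Finset.Icc (l+1) k, Real.exp (-(a₁/((i:ℝ)+a₂)))
      ≤ Real.exp (-a₁ * (Real.log ((k:ℝ)+1+a₂) - Real.log ((l:ℝ)+1+a₂))) := by
    rw [← Real.exp_sum]
    apply Real.exp_le_exp.mpr
    have hsum := aux_log_sum a₂ ha₂ l k hlk
    have : ∑ i ∈ Finset.Icc (l+1) k, -(a₁/((i:ℝ)+a₂))
        = -(a₁ * ∑ i ∈ Finset.Icc (l+1) k, 1/((i:ℝ)+a₂)) := by
      rw [Finset.mul_sum, ← Finset.sum_neg_distrib]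
      apply Finset.sum_congr rfl
      intro i _; field_simp
    rw [this]
    nlinarith [mul_le_mul_of_nonneg_left hsum (le_of_lt ha₁)]
  refine step1.trans ?_
  apply mul_le_mul hprodg hprode (Finset.prod_nonneg (fun i _ => (Real.exp_pos _).le))
  positivity


lemma aux_h (h : ℕ → ℝ) (hpos : ∀ k, 0 < h k)
    (hlog : (fun k : ℕ => Real.log (h k)) =o[atTop] (fun k : ℕ => Real.log (k : ℝ)))
    (ε : ℝ) (hε : 0 < ε) : ∀ᶠ l in atTop, h l ≤ (l:ℝ)^ε := by
  filter_upwards [hlog.bound hε, eventually_ge_atTop 1] with l hb hl1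
  have hl0 : (0:ℝ) < (l:ℝ) := by exact_mod_cast hl1
  have hlog0 : 0 ≤ Real.log (l:ℝ) := Real.log_nonneg (by exact_mod_cast hl1)
  rw [Real.norm_eq_abs, Real.norm_eq_abs, abs_of_nonneg hlog0] at hb
  have h1 : Real.log (h l) ≤ ε * Real.log l := (le_abs_self _).trans hb
  calc h l = Real.exp (Real.log (h l)) := (Real.exp_log (hpos l)).symm
    _ ≤ Real.exp (ε * Real.log l) := Real.exp_le_exp.mpr h1
    _ = (l:ℝ)^ε := by rw [Real.rpow_def_of_pos hl0, mul_comm]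

lemma aux_sum (h : ℕ → ℝ) (hpos : ∀ k, 0 < h k)
    (hlog : (fun k : ℕ => Real.log (h k)) =o[atTop] (fun k : ℕ => Real.log (k : ℝ)))
    (r : ℝ) (hr : r < -1) :
    ∃ M : ℝ, ∀ k, ∑ l ∈ Finset.Icc 1 k, h l * (l:ℝ)^r ≤ M := by
  set ε := (-1 - r)/2 with hε
  have hε0 : 0 < ε := by rw [hε]; linarith
  have hs : r + ε < -1 := by rw [hε]; linarith
  have hev : ∀ᶠ l in atTop, h l * (l:ℝ)^r ≤ (l:ℝ)^(r+ε) := by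
    filter_upwards [aux_h h hpos hlog ε hε0, eventually_ge_atTop 1] with l hb hl1
    have hl0 : (0:ℝ) < (l:ℝ) := by exact_mod_cast hl1
    rw [Real.rpow_add hl0, mul_comm ((l:ℝ)^r)]
    exact mul_le_mul_of_nonneg_right hb (Real.rpow_nonneg hl0.le r)
  obtain ⟨N, hN⟩ := eventually_atTop.mp hev
  have hnonneg : ∀ l, 0 ≤ h l * (l:ℝ)^r := fun l =>
    mul_nonneg (hpos l).le (Real.rpow_nonneg (Nat.cast_nonneg l) r)
  have hsummable : Summable (fun l => h l * (l:ℝ)^r) := by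
    rw [← summable_nat_add_iff N]
    apply Summable.of_nonneg_of_le (fun n => hnonneg _)
      (fun n => hN (n + N) (Nat.le_add_left N n))
    exact (summable_nat_add_iff N).mpr (Real.summable_nat_rpow.mpr hs)
  refine ⟨∑' l, h l * (l:ℝ)^r, fun k => ?_⟩
  exact Summable.sum_le_tsum _ (fun i _ => hnonneg i) hsummable

/-- sum bound, case p·a₁ < χ. -/

theorem stmt_3 (h : ℕ → ℝ) (hpos : ∀ k, 0 < h k) (hmono : Monotone h)
    (hlog : (fun k : ℕ => Real.log (h k)) =o[atTop] (fun k : ℕ => Real.log (k : ℝ)))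
    (a₁ a₂ χ : ℝ) (ha₁ : 0 < a₁) (ha₂ : 0 ≤ a₂) (hχ : 0 < χ)
    (p : ℕ) (hp : 0 < p) (hcase : (p : ℝ) * a₁ < χ) :
    ∃ C : ℝ, 0 < C ∧ ∃ K : ℕ, ∀ k : ℕ, K ≤ k →
      ∑ l ∈ Finset.Icc 1 k,
          (∏ i ∈ Finset.Icc (l + 1) k, (1 - a₁ / ((i : ℝ) + a₂)) ^ p) *
            h l / (l : ℝ) ^ ((1 : ℝ) + χ)
        ≤ C / (k : ℝ) ^ ((p : ℝ) * a₁) := by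
  have hp' : (0:ℝ) < (p:ℝ) := by exact_mod_cast hp
  set q : ℝ := (p:ℝ) * a₁ with hq
  have hq0 : 0 < q := mul_pos hp' ha₁
  have hr : q - (1+χ) < -1 := by simp only [hq]; linarith
  obtain ⟨M, hM⟩ := aux_sum h hpos hlog (q - (1+χ)) hr
  set B : ℝ := ((1+a₁)*Real.exp a₁)^(⌈a₁⌉₊+1) with hB
  have hB0 : 0 < B := by positivity
  set D : ℝ := B^p * (2+a₂)^q with hD
  have hD0 : 0 < D := by positivity
  refine ⟨D * max M 1, by positivity, 1, fun k hk => ?_⟩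
  have hk0 : (0:ℝ) < (k:ℝ) := by exact_mod_cast hk
  have hkq : (0:ℝ) < (k:ℝ)^q := Real.rpow_pos_of_pos hk0 q
  have key : ∀ l ∈ Finset.Icc 1 k,
      (∏ i ∈ Finset.Icc (l + 1) k, (1 - a₁ / ((i : ℝ) + a₂)) ^ p) * h l / (l:ℝ)^((1:ℝ)+χ)
        ≤ D * (h l * (l:ℝ)^(q-(1+χ))) / (k:ℝ)^q := by
    intro l hl
    rw [Finset.mem_Icc] at hl
    obtain ⟨hl1, hlk⟩ := hl
    have hl0 : (0:ℝ) < (l:ℝ) := by exact_mod_cast hl1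
    have hl1' : (1:ℝ) ≤ (l:ℝ) := by exact_mod_cast hl1
    have hlχ : (0:ℝ) < (l:ℝ)^((1:ℝ)+χ) := Real.rpow_pos_of_pos hl0 _
    set Ll := Real.log ((l:ℝ)+1+a₂)
    set Lk := Real.log ((k:ℝ)+1+a₂)
    have hP : (∏ i ∈ Finset.Icc (l + 1) k, (1 - a₁ / ((i : ℝ) + a₂)) ^ p)
        ≤ B^p * (((l:ℝ)+1+a₂)^q * ((k:ℝ)+1+a₂)^(-q)) := by
      rw [Finset.prod_pow]
      calc (∏ i ∈ Finset.Icc (l + 1) k, (1 - a₁ / ((i : ℝ) + a₂))) ^ p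
          ≤ |(∏ i ∈ Finset.Icc (l + 1) k, (1 - a₁ / ((i : ℝ) + a₂))) ^ p| := le_abs_self _
        _ = |∏ i ∈ Finset.Icc (l + 1) k, (1 - a₁ / ((i : ℝ) + a₂))| ^ p := by rw [abs_pow]
        _ ≤ (B * Real.exp (-a₁ * (Lk - Ll))) ^ p := by
            apply pow_le_pow_left₀ (abs_nonneg _)
            exact aux_prod a₁ a₂ ha₁ ha₂ l k hl1 hlk
        _ = B^p * Real.exp (-a₁ * (Lk - Ll))^p := mul_pow _ _ _
        _ = B^p * (((l:ℝ)+1+a₂)^q * ((k:ℝ)+1+a₂)^(-q)) := by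
            congr 1
            rw [← Real.exp_nat_mul]
            have h1 : (p:ℝ) * (-a₁ * (Lk - Ll)) = q * Ll + (-(q * Lk)) := by
              simp only [hq]; ring
            rw [h1, Real.exp_add]
            congr 1
            · rw [Real.rpow_def_of_pos (by positivity), mul_comm]
            · rw [Real.rpow_def_of_pos (by positivity)]
              congr 1; ring
    have h2 : ((l:ℝ)+1+a₂)^q ≤ (2+a₂)^q * (l:ℝ)^q := by
      rw [← Real.mul_rpow (by positivity) hl0.le]
      apply Real.rpow_le_rpow (by positivity) _ hq0.le
      nlinarith
    have h3 : ((k:ℝ)+1+a₂)^(-q) ≤ (k:ℝ)^(-q) :=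
      Real.rpow_le_rpow_of_nonpos hk0 (by linarith) (by linarith)
    have hP2 : (∏ i ∈ Finset.Icc (l + 1) k, (1 - a₁ / ((i : ℝ) + a₂)) ^ p)
        ≤ B^p * (((2+a₂)^q * (l:ℝ)^q) * (k:ℝ)^(-q)) := by
      refine hP.trans ?_
      have hle : ((l:ℝ)+1+a₂)^q * ((k:ℝ)+1+a₂)^(-q)
          ≤ ((2+a₂)^q * (l:ℝ)^q) * (k:ℝ)^(-q) := by
        apply mul_le_mul h2 h3 (Real.rpow_nonneg (by positivity) _) (by positivity)
      exact mul_le_mul_of_nonneg_left hle (by positivity)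
    have heq : D * (h l * (l:ℝ)^(q-(1+χ))) / (k:ℝ)^q
        = (B^p * (((2+a₂)^q * (l:ℝ)^q) * (k:ℝ)^(-q))) * h l / (l:ℝ)^((1:ℝ)+χ) := by
      rw [Real.rpow_sub hl0, Real.rpow_neg hk0.le, hD]
      field_simp
    rw [heq]
    have hmul := mul_le_mul_of_nonneg_right hP2 (hpos l).le
    gcongr
  calc ∑ l ∈ Finset.Icc 1 k,
        (∏ i ∈ Finset.Icc (l + 1) k, (1 - a₁ / ((i : ℝ) + a₂)) ^ p) * h l / (l:ℝ)^((1:ℝ)+χ)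
      ≤ ∑ l ∈ Finset.Icc 1 k, D * (h l * (l:ℝ)^(q-(1+χ))) / (k:ℝ)^q :=
        Finset.sum_le_sum key
    _ = D * (∑ l ∈ Finset.Icc 1 k, h l * (l:ℝ)^(q-(1+χ))) / (k:ℝ)^q := by
        rw [← Finset.sum_div, ← Finset.mul_sum]
    _ ≤ D * max M 1 / (k:ℝ)^q := by
        gcongr
        exact (hM k).trans (le_max_left M 1)
end

section
/- Let (h_k) be a positive, monotonically increasing real sequence with ln h_k = o(ln k). Let a₁ > 0, a₂ ≥ 0, χ > 0 be real numbers and let p be a positive integer with p·a₁ = χ. Then the sequence S_k := ∑_{l=1}^{k} ( ∏_{i=l+1}^{k} (1 − a₁/(i + a₂))^p ) · h_l / l^{1+χ} satisfies S_k = O(h_k · ln k / k^{χ}), i.e., there exist C > 0 and K such that S_k ≤ C · h_k · ln k / k^{χ} for all k ≥ K. -/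
open Filter

private lemma factor_le' {a₁ : ℝ} (ha₁ : 0 < a₁) {y : ℝ} (hy : 0 < y) :
    1 - a₁ / y ≤ (y / (y + 1)) ^ a₁ := by
  have hy1 : (0:ℝ) < y + 1 := by linarith
  have hq : (0:ℝ) < y / (y + 1) := by positivity
  have hlog : Real.log ((y + 1) / y) ≤ 1 / y := by
    have h1 := Real.log_le_sub_one_of_pos (show (0:ℝ) < (y+1)/y by positivity)
    have h2 : (y + 1) / y - 1 = 1 / y := by field_simp; ring
    linarith [h1, h2.le, h2.ge]
  have hloge : Real.log (y / (y + 1)) = - Real.log ((y + 1) / y) := by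
    rw [← Real.log_inv]; congr 1; field_simp
  rw [Real.rpow_def_of_pos hq, hloge, mul_comm]
  have h0 := Real.add_one_le_exp (a₁ * -Real.log ((y + 1) / y))
  have h3 : a₁ * Real.log ((y + 1) / y) ≤ a₁ * (1 / y) :=
    mul_le_mul_of_nonneg_left hlog ha₁.le
  have h4 : a₁ * (1 / y) = a₁ / y := by ring
  have h5 : a₁ * -Real.log ((y + 1) / y) = -(a₁ * Real.log ((y + 1) / y)) := by ring
  linarith

private lemma prod_bound' {a₁ a₂ : ℝ} (ha₁ : 0 < a₁) (ha₂ : 0 ≤ a₂) {m : ℕ} (hm : a₁ ≤ m) :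
    ∀ k, m ≤ k → ∏ i ∈ Finset.Icc (m + 1) k, (1 - a₁ / ((i : ℝ) + a₂))
      ≤ (((m : ℝ) + 1 + a₂) / ((k : ℝ) + 1 + a₂)) ^ a₁ := by
  have hm0 : (0:ℝ) < (m:ℝ) + 1 + a₂ := by positivity
  refine Nat.le_induction ?_ ?_
  · rw [show Finset.Icc (m+1) m = ∅ from Finset.Icc_eq_empty (by omega)]
    simp [div_self hm0.ne', Real.one_rpow]
  · intro k hk ih
    have hk0 : (0:ℝ) < (k:ℝ) + 1 + a₂ := by positivity
    have hprodnn : 0 ≤ ∏ i ∈ Finset.Icc (m + 1) k, (1 - a₁ / ((i : ℝ) + a₂)) := by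
      refine Finset.prod_nonneg fun i hi => ?_
      have hi1 : (m:ℕ) + 1 ≤ i := (Finset.mem_Icc.mp hi).1
      have hmi : (m:ℝ) + 1 ≤ (i:ℝ) := by exact_mod_cast hi1
      have hlt : a₁ < (i:ℝ) + a₂ := by linarith
      have hpos : (0:ℝ) < (i:ℝ) + a₂ := lt_trans ha₁ hlt
      have := (div_lt_one hpos).mpr hlt
      linarith
    rw [Finset.prod_Icc_succ_top (by omega)]
    have hfac : 1 - a₁ / ((k:ℝ) + 1 + a₂)
        ≤ (((k:ℝ) + 1 + a₂) / (((k:ℝ) + 1 + a₂) + 1)) ^ a₁ := factor_le' ha₁ hk0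
    have hfacnn : (0:ℝ) ≤ 1 - a₁ / ((k:ℝ) + 1 + a₂) := by
      have hk1 : a₁ < (k:ℝ) + 1 + a₂ := by
        have : (m:ℝ) ≤ (k:ℝ) := by exact_mod_cast hk
        linarith
      have : a₁ / ((k:ℝ) + 1 + a₂) < 1 := (div_lt_one hk0).mpr hk1
      linarith
    have hcast : ((k:ℝ) + 1) + a₂ = (k:ℝ) + 1 + a₂ := by ring
    have h1 : (∏ i ∈ Finset.Icc (m + 1) k, (1 - a₁ / ((i : ℝ) + a₂))) *
          (1 - a₁ / (((k+1 : ℕ):ℝ) + a₂))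
        ≤ (((m : ℝ) + 1 + a₂) / ((k : ℝ) + 1 + a₂)) ^ a₁ *
          (((k:ℝ) + 1 + a₂) / (((k:ℝ) + 1 + a₂) + 1)) ^ a₁ := by
      push_cast
      rw [hcast]
      exact mul_le_mul ih hfac hfacnn (Real.rpow_nonneg (by positivity) _)
    refine h1.trans ?_
    rw [← Real.mul_rpow (by positivity) (by positivity)]
    apply Real.rpow_le_rpow (by positivity) ?_ ha₁.le
    push_cast
    rw [div_mul_div_comm]
    rw [div_le_div_iff₀ (by positivity) (by positivity)]
    ring_nf
    nlinarith [hm0, hk0]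

private lemma pow_prod_bound {a₁ a₂ χ : ℝ} (ha₁ : 0 < a₁) (ha₂ : 0 ≤ a₂)
    (p : ℕ) (hcase : (p : ℝ) * a₁ = χ) {m k : ℕ} (hm : a₁ ≤ m) (hmk : m ≤ k) :
    ∏ i ∈ Finset.Icc (m + 1) k, (1 - a₁ / ((i : ℝ) + a₂)) ^ p
      ≤ (((m : ℝ) + 1 + a₂) / ((k : ℝ) + 1 + a₂)) ^ χ := by
  have hfnn : ∀ i ∈ Finset.Icc (m + 1) k, (0:ℝ) ≤ 1 - a₁ / ((i : ℝ) + a₂) := by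
    intro i hi
    have hi1 : m + 1 ≤ i := (Finset.mem_Icc.mp hi).1
    have hi1' : (m:ℝ) + 1 ≤ (i:ℝ) := by exact_mod_cast hi1
    have hlt : a₁ < (i:ℝ) + a₂ := by linarith
    have hpos : (0:ℝ) < (i:ℝ) + a₂ := lt_trans ha₁ hlt
    have := (div_lt_one hpos).mpr hlt
    linarith
  have hQnn : 0 ≤ ∏ i ∈ Finset.Icc (m + 1) k, (1 - a₁ / ((i : ℝ) + a₂)) :=
    Finset.prod_nonneg hfnn
  have hxnn : (0:ℝ) ≤ ((m : ℝ) + 1 + a₂) / ((k : ℝ) + 1 + a₂) := by positivity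
  rw [Finset.prod_pow]
  calc (∏ i ∈ Finset.Icc (m + 1) k, (1 - a₁ / ((i : ℝ) + a₂))) ^ p
      ≤ ((((m : ℝ) + 1 + a₂) / ((k : ℝ) + 1 + a₂)) ^ a₁) ^ p :=
        pow_le_pow_left₀ hQnn (prod_bound' ha₁ ha₂ hm k hmk) p
    _ = (((m : ℝ) + 1 + a₂) / ((k : ℝ) + 1 + a₂)) ^ χ := by
        rw [← Real.rpow_natCast ((((m : ℝ) + 1 + a₂) / ((k : ℝ) + 1 + a₂)) ^ a₁) p,
          ← Real.rpow_mul hxnn]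
        rw [mul_comm a₁ (p:ℝ), hcase]

private lemma pow_prod_nonneg {a₁ a₂ : ℝ} (ha₁ : 0 < a₁) (ha₂ : 0 ≤ a₂)
    (p : ℕ) {m k : ℕ} (hm : a₁ ≤ m) :
    0 ≤ ∏ i ∈ Finset.Icc (m + 1) k, (1 - a₁ / ((i : ℝ) + a₂)) ^ p := by
  refine Finset.prod_nonneg fun i hi => pow_nonneg ?_ p
  have hi1 : m + 1 ≤ i := (Finset.mem_Icc.mp hi).1
  have hi1' : (m:ℝ) + 1 ≤ (i:ℝ) := by exact_mod_cast hi1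
  have hlt : a₁ < (i:ℝ) + a₂ := by linarith
  have hpos : (0:ℝ) < (i:ℝ) + a₂ := lt_trans ha₁ hlt
  have := (div_lt_one hpos).mpr hlt
  linarith

/-- sum bound, case p·a₁ = χ. -/
theorem stmt_4 (h : ℕ → ℝ) (hpos : ∀ k, 0 < h k) (hmono : Monotone h)
    (hlog : (fun k : ℕ => Real.log (h k)) =o[atTop] (fun k : ℕ => Real.log (k : ℝ)))
    (a₁ a₂ χ : ℝ) (ha₁ : 0 < a₁) (ha₂ : 0 ≤ a₂) (hχ : 0 < χ)
    (p : ℕ) (hp : 0 < p) (hcase : (p : ℝ) * a₁ = χ) :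
    ∃ C : ℝ, 0 < C ∧ ∃ K : ℕ, ∀ k : ℕ, K ≤ k →
      ∑ l ∈ Finset.Icc 1 k,
          (∏ i ∈ Finset.Icc (l + 1) k, (1 - a₁ / ((i : ℝ) + a₂)) ^ p) *
            h l / (l : ℝ) ^ ((1 : ℝ) + χ)
        ≤ C * h k * Real.log (k : ℝ) / (k : ℝ) ^ χ := by
  set l₀ : ℕ := ⌈a₁⌉₊ with hl₀def
  have hal₀ : a₁ ≤ (l₀ : ℝ) := Nat.le_ceil a₁
  have hl₀1 : 1 ≤ l₀ := Nat.one_le_ceil_iff.mpr ha₁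
  set M : ℝ := max 1 a₁ with hMdef
  have hM1 : (1:ℝ) ≤ M := le_max_left 1 a₁
  have hMa : a₁ ≤ M := le_max_right 1 a₁
  set B₀ : ℝ := M ^ (p * l₀) with hB₀def
  have hB₀1 : (1:ℝ) ≤ B₀ := one_le_pow₀ hM1
  have hB₀0 : (0:ℝ) < B₀ := lt_of_lt_of_le one_pos hB₀1
  set D : ℝ := (l₀ : ℝ) + 2 + a₂ with hDdef
  have hD0 : (0:ℝ) < D := by positivity
  have hDχ : (0:ℝ) < D ^ χ := Real.rpow_pos_of_pos hD0 χ
  refine ⟨2 * B₀ * D ^ χ, mul_pos (mul_pos two_pos hB₀0) hDχ, max l₀ 3, fun k hk => ?_⟩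
  have hkl₀ : l₀ ≤ k := le_trans (le_max_left _ _) hk
  have hk3 : 3 ≤ k := le_trans (le_max_right _ _) hk
  have hkpos : (0:ℝ) < (k:ℝ) := by positivity
  have hkχ : (0:ℝ) < (k:ℝ) ^ χ := Real.rpow_pos_of_pos hkpos χ
  have hlogk : (1:ℝ) ≤ Real.log k := by
    rw [Real.le_log_iff_exp_le hkpos]
    calc Real.exp 1 ≤ 2.7182818286 := Real.exp_one_lt_d9.le
      _ ≤ (3:ℝ) := by norm_num
      _ ≤ (k:ℝ) := by exact_mod_cast hk3
  -- per-term bound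
  have hterm : ∀ l ∈ Finset.Icc 1 k,
      (∏ i ∈ Finset.Icc (l + 1) k, (1 - a₁ / ((i : ℝ) + a₂)) ^ p) *
          h l / (l : ℝ) ^ ((1 : ℝ) + χ)
        ≤ (B₀ * D ^ χ * h k / (k:ℝ) ^ χ) * (1 / (l : ℝ)) := by
    intro l hl
    obtain ⟨hl1, hlk⟩ := Finset.mem_Icc.mp hl
    have hlpos : (0:ℝ) < (l:ℝ) := by exact_mod_cast hl1
    have hlk' : (l:ℝ) ≤ (k:ℝ) := by exact_mod_cast hlk
    have hratio : (0:ℝ) ≤ D * (l:ℝ) / (k:ℝ) := by positivity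
    -- claim1
    have claim1 : (∏ i ∈ Finset.Icc (l + 1) k, (1 - a₁ / ((i : ℝ) + a₂)) ^ p)
        ≤ B₀ * (D * (l:ℝ) / (k:ℝ)) ^ χ := by
      rcases le_or_gt l₀ l with hll₀ | hll₀
      · have hal : a₁ ≤ (l:ℝ) := le_trans hal₀ (by exact_mod_cast hll₀)
        have hb := pow_prod_bound ha₁ ha₂ p hcase (m := l) (k := k) hal hlk
        refine hb.trans ?_
        have hle : ((l:ℝ) + 1 + a₂) / ((k:ℝ) + 1 + a₂) ≤ D * (l:ℝ) / (k:ℝ) := by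
          apply div_le_div₀ (by positivity) ?_ hkpos (by linarith)
          have hl1' : (1:ℝ) ≤ (l:ℝ) := by exact_mod_cast hl1
          have hl₀0 : (0:ℝ) ≤ (l₀:ℝ) := by positivity
          nlinarith
        calc (((l:ℝ) + 1 + a₂) / ((k:ℝ) + 1 + a₂)) ^ χ
            ≤ (D * (l:ℝ) / (k:ℝ)) ^ χ :=
              Real.rpow_le_rpow (by positivity) hle hχ.le
          _ ≤ B₀ * (D * (l:ℝ) / (k:ℝ)) ^ χ :=
              le_mul_of_one_le_left (Real.rpow_nonneg hratio χ) hB₀1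
      · -- split the product
        have hsplit : ∏ i ∈ Finset.Icc (l + 1) k, (1 - a₁ / ((i : ℝ) + a₂)) ^ p
            = (∏ i ∈ Finset.Ioc l l₀, (1 - a₁ / ((i : ℝ) + a₂)) ^ p) *
              (∏ i ∈ Finset.Ioc l₀ k, (1 - a₁ / ((i : ℝ) + a₂)) ^ p) := by
          rw [Finset.Icc_add_one_left_eq_Ioc,
            Finset.prod_Ioc_consecutive _ hll₀.le hkl₀]
        rw [hsplit]
        have hA2 : (∏ i ∈ Finset.Ioc l₀ k, (1 - a₁ / ((i : ℝ) + a₂)) ^ p)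
            ≤ (((l₀:ℝ) + 1 + a₂) / ((k:ℝ) + 1 + a₂)) ^ χ := by
          rw [← Finset.Icc_add_one_left_eq_Ioc]
          exact pow_prod_bound ha₁ ha₂ p hcase hal₀ hkl₀
        have hA2nn : 0 ≤ ∏ i ∈ Finset.Ioc l₀ k, (1 - a₁ / ((i : ℝ) + a₂)) ^ p := by
          rw [← Finset.Icc_add_one_left_eq_Ioc]
          exact pow_prod_nonneg ha₁ ha₂ p hal₀
        have hA1 : |∏ i ∈ Finset.Ioc l l₀, (1 - a₁ / ((i : ℝ) + a₂)) ^ p| ≤ B₀ := by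
          rw [Finset.abs_prod]
          calc ∏ i ∈ Finset.Ioc l l₀, |(1 - a₁ / ((i : ℝ) + a₂)) ^ p|
              ≤ ∏ _i ∈ Finset.Ioc l l₀, M ^ p := by
                refine Finset.prod_le_prod (fun i _ => abs_nonneg _) fun i hi => ?_
                have hi1 : l + 1 ≤ i := (Finset.mem_Ioc.mp hi).1
                have hi1' : (1:ℝ) ≤ (i:ℝ) := by
                  have : 1 ≤ i := by omega
                  exact_mod_cast this
                have hipos : (0:ℝ) < (i:ℝ) + a₂ := by linarith
                have hfle : |1 - a₁ / ((i : ℝ) + a₂)| ≤ M := by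
                  rw [abs_le]
                  constructor
                  · have : a₁ / ((i:ℝ) + a₂) ≤ a₁ := div_le_self ha₁.le (by linarith)
                    linarith
                  · have : 0 ≤ a₁ / ((i:ℝ) + a₂) := by positivity
                    linarith
                rw [abs_pow]
                exact pow_le_pow_left₀ (abs_nonneg _) hfle p
            _ = (M ^ p) ^ (l₀ - l) := by
                rw [Finset.prod_const, Nat.card_Ioc]
            _ = M ^ (p * (l₀ - l)) := by rw [← pow_mul]
            _ ≤ B₀ := pow_le_pow_right₀ hM1 (Nat.mul_le_mul_left p (Nat.sub_le l₀ l))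
        have hle : ((l₀:ℝ) + 1 + a₂) / ((k:ℝ) + 1 + a₂) ≤ D * (l:ℝ) / (k:ℝ) := by
          apply div_le_div₀ (by positivity) ?_ hkpos (by linarith)
          have hl1' : (1:ℝ) ≤ (l:ℝ) := by exact_mod_cast hl1
          nlinarith
        calc (∏ i ∈ Finset.Ioc l l₀, (1 - a₁ / ((i : ℝ) + a₂)) ^ p) *
              (∏ i ∈ Finset.Ioc l₀ k, (1 - a₁ / ((i : ℝ) + a₂)) ^ p)
            ≤ |∏ i ∈ Finset.Ioc l l₀, (1 - a₁ / ((i : ℝ) + a₂)) ^ p| *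
              (∏ i ∈ Finset.Ioc l₀ k, (1 - a₁ / ((i : ℝ) + a₂)) ^ p) :=
              mul_le_mul_of_nonneg_right (le_abs_self _) hA2nn
          _ ≤ B₀ * ((((l₀:ℝ) + 1 + a₂) / ((k:ℝ) + 1 + a₂)) ^ χ) :=
              mul_le_mul hA1 hA2 hA2nn hB₀0.le
          _ ≤ B₀ * (D * (l:ℝ) / (k:ℝ)) ^ χ := by
              exact mul_le_mul_of_nonneg_left
                (Real.rpow_le_rpow (by positivity) hle hχ.le) hB₀0.le
    -- now the term bound
    have hEq : (B₀ * (D * (l:ℝ) / (k:ℝ)) ^ χ) * h l / (l : ℝ) ^ ((1 : ℝ) + χ)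
        = (B₀ * D ^ χ * h l / (k:ℝ) ^ χ) * (1 / (l : ℝ)) := by
      have e1 : (D * (l:ℝ) / (k:ℝ)) ^ χ = D ^ χ * (l:ℝ) ^ χ / (k:ℝ) ^ χ := by
        rw [Real.div_rpow (by positivity) hkpos.le, Real.mul_rpow hD0.le hlpos.le]
      have e2 : (l:ℝ) ^ ((1:ℝ) + χ) = (l:ℝ) * (l:ℝ) ^ χ := by
        rw [Real.rpow_add hlpos, Real.rpow_one]
      rw [e1, e2]
      have hlχ : (0:ℝ) < (l:ℝ) ^ χ := Real.rpow_pos_of_pos hlpos χ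
      field_simp
    have hhl : h l ≤ h k := hmono hlk
    calc (∏ i ∈ Finset.Icc (l + 1) k, (1 - a₁ / ((i : ℝ) + a₂)) ^ p) *
          h l / (l : ℝ) ^ ((1 : ℝ) + χ)
        ≤ (B₀ * (D * (l:ℝ) / (k:ℝ)) ^ χ) * h l / (l : ℝ) ^ ((1 : ℝ) + χ) := by
          have hx : (0:ℝ) < (l:ℝ) ^ ((1:ℝ) + χ) := Real.rpow_pos_of_pos hlpos _
          exact (div_le_div_iff_of_pos_right hx).mpr
            (mul_le_mul_of_nonneg_right claim1 (hpos l).le)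
      _ = (B₀ * D ^ χ * h l / (k:ℝ) ^ χ) * (1 / (l : ℝ)) := hEq
      _ ≤ (B₀ * D ^ χ * h k / (k:ℝ) ^ χ) * (1 / (l : ℝ)) := by
          apply mul_le_mul_of_nonneg_right ?_ (by positivity)
          exact (div_le_div_iff_of_pos_right hkχ).mpr
            (mul_le_mul_of_nonneg_left hhl (by positivity))
  -- sum up
  calc ∑ l ∈ Finset.Icc 1 k,
        (∏ i ∈ Finset.Icc (l + 1) k, (1 - a₁ / ((i : ℝ) + a₂)) ^ p) *
          h l / (l : ℝ) ^ ((1 : ℝ) + χ)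
      ≤ ∑ l ∈ Finset.Icc 1 k, (B₀ * D ^ χ * h k / (k:ℝ) ^ χ) * (1 / (l : ℝ)) :=
        Finset.sum_le_sum hterm
    _ = (B₀ * D ^ χ * h k / (k:ℝ) ^ χ) * ∑ l ∈ Finset.Icc 1 k, (1 / (l : ℝ)) := by
        rw [Finset.mul_sum]
    _ ≤ (B₀ * D ^ χ * h k / (k:ℝ) ^ χ) * (2 * Real.log k) := by
        apply mul_le_mul_of_nonneg_left ?_
          (div_nonneg (mul_nonneg (by positivity) (hpos k).le) hkχ.le)
        have hsum : ∑ l ∈ Finset.Icc 1 k, (1 / (l : ℝ)) = (harmonic k : ℝ) := by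
          rw [harmonic_eq_sum_Icc]
          push_cast
          simp [one_div]
        rw [hsum]
        have := harmonic_le_one_add_log k
        linarith
    _ = 2 * B₀ * D ^ χ * h k * Real.log k / (k:ℝ) ^ χ := by ring
end

section
/- Let (h_k) be a positive, monotonically increasing real sequence with ln h_k = o(ln k). Let a₁ > 0, a₂ ≥ 0, χ > 0 be real numbers and let p be a positive integer with p·a₁ > χ. Then the sequence S_k := ∑_{l=1}^{k} ( ∏_{i=l+1}^{k} (1 − a₁/(i + a₂))^p ) · h_l / l^{1+χ} satisfies S_k = O(h_k / k^{χ}), i.e., there exist C > 0 and K such that S_k ≤ C · h_k / k^{χ} for all k ≥ K. -/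
open Filter

set_option maxHeartbeats 1000000 in
/-- sum bound, case p·a₁ > χ. -/
theorem stmt_5 (h : ℕ → ℝ) (hpos : ∀ k, 0 < h k) (hmono : Monotone h)
    (hlog : (fun k : ℕ => Real.log (h k)) =o[atTop] (fun k : ℕ => Real.log (k : ℝ)))
    (a₁ a₂ χ : ℝ) (ha₁ : 0 < a₁) (ha₂ : 0 ≤ a₂) (hχ : 0 < χ)
    (p : ℕ) (hp : 0 < p) (hcase : χ < (p : ℝ) * a₁) :
    ∃ C : ℝ, 0 < C ∧ ∃ K : ℕ, ∀ k : ℕ, K ≤ k →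
      ∑ l ∈ Finset.Icc 1 k,
          (∏ i ∈ Finset.Icc (l + 1) k, (1 - a₁ / ((i : ℝ) + a₂)) ^ p) *
            h l / (l : ℝ) ^ ((1 : ℝ) + χ)
        ≤ C * h k / (k : ℝ) ^ χ := by
  obtain ⟨S, hSdef⟩ : ∃ S : ℕ → ℝ, S = fun (k : ℕ) => ∑ l ∈ Finset.Icc 1 k,
      (∏ i ∈ Finset.Icc (l + 1) k, (1 - a₁ / ((i : ℝ) + a₂)) ^ p) *
        h l / (l : ℝ) ^ ((1 : ℝ) + χ) := ⟨_, rfl⟩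
  obtain ⟨q, hq⟩ : ∃ q : ℝ, q = (p : ℝ) * a₁ := ⟨_, rfl⟩
  obtain ⟨δ, hδdef⟩ : ∃ δ : ℝ, δ = q - χ := ⟨_, rfl⟩
  have hcase' : χ < q := by rw [hq]; exact hcase
  have hδ : 0 < δ := by rw [hδdef]; linarith
  have hqa : a₁ ≤ q := by
    have h1 : (1 : ℝ) ≤ (p : ℝ) := by exact_mod_cast hp
    rw [hq]; nlinarith
  have hqpos : 0 < q := lt_trans hχ hcase'
  -- the recursion
  have hrec : ∀ k : ℕ, S (k + 1) = (1 - a₁ / ((k : ℝ) + 1 + a₂)) ^ p * S k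
      + h (k + 1) / ((k : ℝ) + 1) ^ ((1 : ℝ) + χ) := by
    intro k
    simp only [hSdef]
    rw [Finset.sum_Icc_succ_top (by omega : 1 ≤ k + 1)]
    have he : Finset.Icc (k + 1 + 1) (k + 1) = ∅ := Finset.Icc_eq_empty (by omega)
    rw [he, Finset.prod_empty, one_mul]
    congr 1
    · rw [Finset.mul_sum]
      refine Finset.sum_congr rfl ?_
      intro l hl
      have hlk : l ≤ k := (Finset.mem_Icc.mp hl).2
      rw [Finset.prod_Icc_succ_top (by omega : l + 1 ≤ k + 1)]
      push_cast
      ring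
    · push_cast
      ring_nf
  -- choose K
  obtain ⟨K, hKgt⟩ := exists_nat_gt (max (max 2 q) (2 * q * (1 + a₂) / δ))
  have hK2 : (2 : ℝ) < (K : ℝ) := lt_of_le_of_lt (le_max_of_le_left (le_max_left _ _)) hKgt
  have hKq : q < (K : ℝ) := lt_of_le_of_lt (le_max_of_le_left (le_max_right _ _)) hKgt
  have hKδ : 2 * q * (1 + a₂) < δ * (K : ℝ) := by
    have h1 : 2 * q * (1 + a₂) / δ < (K : ℝ) := lt_of_le_of_lt (le_max_right _ _) hKgt
    rw [div_lt_iff₀ hδ] at h1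
    linarith
  -- key bound on the one-step ratio
  have hg : ∀ k : ℕ, K ≤ k →
      (1 - a₁ / ((k : ℝ) + 1 + a₂)) ^ p * (((k : ℝ) + 1) / (k : ℝ)) ^ χ
        ≤ 1 - δ / (4 * ((k : ℝ) + 1)) := by
    intro k hk
    have hkK : (K : ℝ) ≤ (k : ℝ) := Nat.cast_le.mpr hk
    have hk2 : (2 : ℝ) < (k : ℝ) := lt_of_lt_of_le hK2 hkK
    have hk0 : (0 : ℝ) < (k : ℝ) := by linarith
    have hm0 : (0 : ℝ) < (k : ℝ) + 1 := by linarith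
    have hmq : q < (k : ℝ) + 1 := by linarith
    have hma : (0 : ℝ) < (k : ℝ) + 1 + a₂ := by linarith
    have hδm : 2 * q * (1 + a₂) ≤ δ * (k : ℝ) := by
      have h1 : δ * (K : ℝ) ≤ δ * (k : ℝ) := mul_le_mul_of_nonneg_left hkK hδ.le
      linarith
    obtain ⟨x, hx⟩ : ∃ x : ℝ, x = q / ((k : ℝ) + 1 + a₂) - χ / (k : ℝ) := ⟨_, rfl⟩
    have hx1 : δ / (2 * ((k : ℝ) + 1)) ≤ x := by
      have hne1 : ((k : ℝ) + 1 + a₂) ≠ 0 := hma.ne'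
      have hne2 : ((k : ℝ)) ≠ 0 := hk0.ne'
      have hne3 : ((k : ℝ) + 1) ≠ 0 := hm0.ne'
      have key : q / ((k : ℝ) + 1 + a₂) - χ / (k : ℝ) - δ / (2 * ((k : ℝ) + 1))
          = (2 * ((k : ℝ) + 1) * (q * (k : ℝ) - χ * ((k : ℝ) + 1 + a₂))
              - δ * ((k : ℝ) + 1 + a₂) * (k : ℝ))
            / (2 * ((k : ℝ) + 1) * ((k : ℝ) + 1 + a₂) * (k : ℝ)) := by
        field_simp
      have hnum : 0 ≤ 2 * ((k : ℝ) + 1) * (q * (k : ℝ) - χ * ((k : ℝ) + 1 + a₂))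
          - δ * ((k : ℝ) + 1 + a₂) * (k : ℝ) := by
        have hqχ : q = χ + δ := by rw [hδdef]; ring
        have expand : 2 * ((k : ℝ) + 1) * (q * (k : ℝ) - χ * ((k : ℝ) + 1 + a₂))
              - δ * ((k : ℝ) + 1 + a₂) * (k : ℝ)
            = δ * a₂ * ((k : ℝ) + 1) + 2 * (δ * ((k : ℝ) + 1)) + δ * a₂
              + (((k : ℝ) + 1) * (δ * (k : ℝ)) - ((k : ℝ) + 1) * (2 * q * (1 + a₂)))
              := by
          rw [hqχ]; ring
        rw [expand]
        have H := mul_le_mul_of_nonneg_left hδm (by linarith : (0:ℝ) ≤ (k : ℝ) + 1)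
        have ha1 : 0 ≤ δ * a₂ * ((k : ℝ) + 1) :=
          mul_nonneg (mul_nonneg hδ.le ha₂) (by linarith)
        have ha2 : 0 ≤ δ * ((k : ℝ) + 1) := mul_nonneg hδ.le (by linarith)
        have ha3 : 0 ≤ δ * a₂ := mul_nonneg hδ.le ha₂
        linarith
      have hden : 0 < 2 * ((k : ℝ) + 1) * ((k : ℝ) + 1 + a₂) * (k : ℝ) := by positivity
      have h2 := div_nonneg hnum hden.le
      rw [← key] at h2
      rw [hx]; linarith
    have hx0 : 0 ≤ x := le_trans (div_nonneg hδ.le (by linarith)) hx1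
    have hx2 : x ≤ 1 := by
      have h1 : q / ((k : ℝ) + 1 + a₂) ≤ q / ((k : ℝ) + 1) :=
        div_le_div_of_nonneg_left hqpos.le hm0 (by linarith)
      have h2 : q / ((k : ℝ) + 1) ≤ 1 := by rw [div_le_one hm0]; linarith
      have h3 : 0 ≤ χ / (k : ℝ) := div_nonneg hχ.le hk0.le
      rw [hx]; linarith
    have hf0 : 0 ≤ 1 - a₁ / ((k : ℝ) + 1 + a₂) := by
      rw [sub_nonneg, div_le_one hma]; linarith
    have hfe : 1 - a₁ / ((k : ℝ) + 1 + a₂) ≤ Real.exp (-(a₁ / ((k : ℝ) + 1 + a₂))) := by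
      have := Real.add_one_le_exp (-(a₁ / ((k : ℝ) + 1 + a₂)))
      linarith
    have hfp : (1 - a₁ / ((k : ℝ) + 1 + a₂)) ^ p ≤ Real.exp (-(q / ((k : ℝ) + 1 + a₂))) := by
      calc (1 - a₁ / ((k : ℝ) + 1 + a₂)) ^ p
          ≤ (Real.exp (-(a₁ / ((k : ℝ) + 1 + a₂)))) ^ p := pow_le_pow_left₀ hf0 hfe p
        _ = Real.exp ((p : ℝ) * (-(a₁ / ((k : ℝ) + 1 + a₂)))) :=
            (Real.exp_nat_mul _ p).symm
        _ = Real.exp (-(q / ((k : ℝ) + 1 + a₂))) := by rw [hq]; congr 1; ring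
    have hrg : (((k : ℝ) + 1) / (k : ℝ)) ^ χ ≤ Real.exp (χ / (k : ℝ)) := by
      rw [Real.rpow_def_of_pos (div_pos hm0 hk0)]
      apply Real.exp_le_exp.mpr
      have hlog2 : Real.log (((k : ℝ) + 1) / (k : ℝ)) ≤ ((k : ℝ) + 1) / (k : ℝ) - 1 :=
        Real.log_le_sub_one_of_pos (div_pos hm0 hk0)
      have he2 : ((k : ℝ) + 1) / (k : ℝ) - 1 = 1 / (k : ℝ) := by
        field_simp
        ring
      calc Real.log (((k : ℝ) + 1) / (k : ℝ)) * χ ≤ (1 / (k : ℝ)) * χ := by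
            apply mul_le_mul_of_nonneg_right _ hχ.le
            rw [← he2]; exact hlog2
        _ = χ / (k : ℝ) := by ring
    have hcomb : (1 - a₁ / ((k : ℝ) + 1 + a₂)) ^ p * (((k : ℝ) + 1) / (k : ℝ)) ^ χ
        ≤ Real.exp (-x) := by
      calc (1 - a₁ / ((k : ℝ) + 1 + a₂)) ^ p * (((k : ℝ) + 1) / (k : ℝ)) ^ χ
          ≤ Real.exp (-(q / ((k : ℝ) + 1 + a₂))) * Real.exp (χ / (k : ℝ)) := by
            apply mul_le_mul hfp hrg (Real.rpow_nonneg (by positivity) _) (Real.exp_nonneg _)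
        _ = Real.exp (-x) := by rw [← Real.exp_add]; congr 1; rw [hx]; ring
    have hex : Real.exp (-x) ≤ 1 - x / 2 := by
      have h1 : x + 1 ≤ Real.exp x := Real.add_one_le_exp x
      have h3 : (0 : ℝ) < Real.exp x := Real.exp_pos x
      rw [Real.exp_neg, inv_le_iff_one_le_mul₀' h3]
      nlinarith [mul_le_mul_of_nonneg_right h1 (by linarith : (0:ℝ) ≤ 1 - x / 2),
        mul_nonneg hx0 (by linarith : (0:ℝ) ≤ 1 - x)]
    have hlast : 1 - x / 2 ≤ 1 - δ / (4 * ((k : ℝ) + 1)) := by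
      have e : δ / (4 * ((k : ℝ) + 1)) = δ / (2 * ((k : ℝ) + 1)) / 2 := by
        rw [div_div]; congr 1; ring
      linarith
    linarith
  -- the constant
  obtain ⟨C, hC8, hCb, hCpos⟩ :
      ∃ C : ℝ, 8 / δ ≤ C ∧ S K * (K : ℝ) ^ χ / h K ≤ C ∧ 0 < C := by
    refine ⟨max (8 / δ) (S K * (K : ℝ) ^ χ / h K) + 1, ?_, ?_, ?_⟩
    · have := le_max_left (8 / δ) (S K * (K : ℝ) ^ χ / h K); linarith
    · have := le_max_right (8 / δ) (S K * (K : ℝ) ^ χ / h K); linarith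
    · have h1 : 0 < 8 / δ := by positivity
      have := le_max_left (8 / δ) (S K * (K : ℝ) ^ χ / h K); linarith
  have hCδ : 8 ≤ C * δ := by
    rw [div_le_iff₀ hδ] at hC8; linarith
  -- main induction
  have hmain : ∀ k : ℕ, K ≤ k → S k ≤ C * h k / (k : ℝ) ^ χ := by
    intro k hk
    induction k, hk using Nat.le_induction with
    | base =>
        have hKpos : (0 : ℝ) < (K : ℝ) := by linarith
        have hrp : 0 < (K : ℝ) ^ χ := Real.rpow_pos_of_pos hKpos χ
        rw [le_div_iff₀ hrp]
        rw [div_le_iff₀ (hpos K)] at hCb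
        linarith
    | succ k hk ih =>
        have hkR : (2 : ℝ) < (k : ℝ) := lt_of_lt_of_le hK2 (Nat.cast_le.mpr hk)
        have hk0 : (0 : ℝ) < (k : ℝ) := by linarith
        have hk10 : (0 : ℝ) < (k : ℝ) + 1 := by linarith
        have hrk : 0 < (k : ℝ) ^ χ := Real.rpow_pos_of_pos hk0 χ
        have hrk1 : 0 < ((k : ℝ) + 1) ^ χ := Real.rpow_pos_of_pos hk10 χ
        have hcast : ((k + 1 : ℕ) : ℝ) = (k : ℝ) + 1 := by push_cast; ring
        rw [hrec k, hcast]
        have hg' := hg k hk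
        have hf0 : 0 ≤ 1 - a₁ / ((k : ℝ) + 1 + a₂) := by
          rw [sub_nonneg, div_le_one (by linarith)]
          have hKk : (K : ℝ) ≤ (k : ℝ) := Nat.cast_le.mpr hk
          linarith
        have hfp0 : 0 ≤ (1 - a₁ / ((k : ℝ) + 1 + a₂)) ^ p := pow_nonneg hf0 p
        have hratio : 0 < (((k : ℝ) + 1) / (k : ℝ)) ^ χ :=
          Real.rpow_pos_of_pos (div_pos hk10 hk0) χ
        have hid : ((k : ℝ)) ^ χ * ((((k : ℝ) + 1) / (k : ℝ)) ^ χ) = ((k : ℝ) + 1) ^ χ := by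
          rw [← Real.mul_rpow hk0.le (div_pos hk10 hk0).le]
          congr 1
          field_simp
        have hsplit : ((k : ℝ) + 1) ^ ((1 : ℝ) + χ) = ((k : ℝ) + 1) * ((k : ℝ) + 1) ^ χ := by
          rw [Real.rpow_add hk10, Real.rpow_one]
        have step1 : (1 - a₁ / ((k : ℝ) + 1 + a₂)) ^ p * S k
            ≤ (1 - a₁ / ((k : ℝ) + 1 + a₂)) ^ p * (C * h (k + 1) / (k : ℝ) ^ χ) := by
          apply mul_le_mul_of_nonneg_left _ hfp0
          calc S k ≤ C * h k / (k : ℝ) ^ χ := ih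
            _ ≤ C * h (k + 1) / (k : ℝ) ^ χ := by
                apply div_le_div_of_nonneg_right _ hrk.le
                exact mul_le_mul_of_nonneg_left (hmono (Nat.le_succ k)) hCpos.le
        have heq : (1 - a₁ / ((k : ℝ) + 1 + a₂)) ^ p * (C * h (k + 1) / (k : ℝ) ^ χ)
            = C * h (k + 1) / (((k : ℝ) + 1)) ^ χ
              * ((1 - a₁ / ((k : ℝ) + 1 + a₂)) ^ p * ((((k : ℝ) + 1) / (k : ℝ))) ^ χ) := by
          rw [← hid]
          have gen : ∀ F A B CH : ℝ, A ≠ 0 → B ≠ 0 →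
              F * (CH / A) = CH / (A * B) * (F * B) := by
            intro F A B CH hA hB
            field_simp
          exact gen _ _ _ _ hrk.ne' hratio.ne'
        have hA0 : 0 ≤ C * h (k + 1) / (((k : ℝ) + 1)) ^ χ :=
          div_nonneg (mul_nonneg hCpos.le (hpos (k + 1)).le) hrk1.le
        have step2 : (1 - a₁ / ((k : ℝ) + 1 + a₂)) ^ p * (C * h (k + 1) / (k : ℝ) ^ χ)
            ≤ C * h (k + 1) / (((k : ℝ) + 1)) ^ χ * (1 - δ / (4 * ((k : ℝ) + 1))) := by
          rw [heq]
          exact mul_le_mul_of_nonneg_left hg' hA0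
        have hfinal : h (k + 1) / ((k : ℝ) + 1) ^ ((1 : ℝ) + χ)
            ≤ C * h (k + 1) / (((k : ℝ) + 1)) ^ χ * (δ / (4 * ((k : ℝ) + 1))) := by
          rw [hsplit]
          have hX : (0 : ℝ) < h (k + 1) / (((k : ℝ) + 1) * ((k : ℝ) + 1) ^ χ) :=
            div_pos (hpos (k + 1)) (mul_pos hk10 hrk1)
          have e1 : C * h (k + 1) / (((k : ℝ) + 1)) ^ χ * (δ / (4 * ((k : ℝ) + 1)))
              = (C * δ / 4) * (h (k + 1) / (((k : ℝ) + 1) * ((k : ℝ) + 1) ^ χ)) := by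
            have gen : ∀ Cc dd hh mm B : ℝ, B ≠ 0 → mm ≠ 0 →
                Cc * hh / B * (dd / (4 * mm)) = (Cc * dd / 4) * (hh / (mm * B)) := by
              intro Cc dd hh mm B hB hm
              field_simp
            exact gen _ _ _ _ _ hrk1.ne' hk10.ne'
          rw [e1]
          nlinarith [hX, hCδ]
        have hsum : C * h (k + 1) / (((k : ℝ) + 1)) ^ χ * (1 - δ / (4 * ((k : ℝ) + 1)))
            + C * h (k + 1) / (((k : ℝ) + 1)) ^ χ * (δ / (4 * ((k : ℝ) + 1)))
            = C * h (k + 1) / (((k : ℝ) + 1)) ^ χ := by ring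
        linarith
  refine ⟨C, hCpos, K, fun k hk => ?_⟩
  have := hmain k hk
  simpa [hSdef] using this
end

section
/- Let ω be a real random variable with cumulative distribution function F, fix y ∈ ℝ and a threshold c ∈ ℝ, and let s⁰ = 1 if y + ω ≤ c and s⁰ = 0 otherwise. Let p, q ∈ [0,1] with p + q = 1, and let s ∈ {0,1} be a random variable such that, conditionally on ω, ℙ(s = 0 | s⁰ = 1) = p, ℙ(s = 1 | s⁰ = 1) = 1 − p, ℙ(s = 1 | s⁰ = 0) = q, ℙ(s = 0 | s⁰ = 0) = 1 − q. Then ℙ(s = 1) = q, independently of y, c and F; hence the distribution of the tampered observation carries no information about y. -/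
open MeasureTheory

theorem measureReal_eq_of_inter_eq_mul_of_sdiff_eq_mul {Ω : Type*} [MeasurableSpace Ω]
    {μ : Measure Ω} [IsProbabilityMeasure μ] {A T : Set Ω} (hA : MeasurableSet A) {r : ℝ}
    (hin : μ.real (T ∩ A) = r * μ.real A) (hout : μ.real (T \ A) = r * μ.real Aᶜ) :
    μ.real T = r := by
  rw [← measureReal_inter_add_sdiff hA, hin, hout, ← mul_add, probReal_add_probReal_compl hA,
    mul_one]

theorem stmt_8_general {Ω' : Type*} [MeasurableSpace Ω'] (μ : Measure Ω') [IsProbabilityMeasure μ]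
    (ω : Ω' → ℝ) (hω : Measurable ω)
    (y c : ℝ)
    (s0 : Ω' → ℝ) (hs0 : ∀ a, s0 a = if y + ω a ≤ c then 1 else 0)
    (p q : ℝ)
    (hpq : p + q = 1)
    (s : Ω' → ℝ)
    (hchan11 : (μ {a | s a = 1 ∧ s0 a = 1}).toReal = (1 - p) * (μ {a | s0 a = 1}).toReal)
    (hchan01 : (μ {a | s a = 1 ∧ s0 a = 0}).toReal = q * (μ {a | s0 a = 0}).toReal) :
    (μ {a | s a = 1}).toReal = q := by
  set A : Set Ω' := {a | y + ω a ≤ c}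
  have hA : MeasurableSet A := measurableSet_le (hω.const_add y) measurable_const
  obtain rfl : s0 = A.indicator 1 := funext fun a => by rw [hs0, Set.indicator_apply]; rfl
  simp only [Set.indicator_eq_one_iff_mem, Set.indicator_eq_zero_iff_notMem] at hchan11 hchan01
  rw [show 1 - p = q by linarith] at hchan11
  -- Closed up to defeq: `(μ S).toReal` is `μ.real S` and `{a | s a = 1 ∧ a ∈ A}` is `{a | s a = 1} ∩ A`.
  exact measureReal_eq_of_inter_eq_mul_of_sdiff_eq_mul hA hchan11 hchan01

/-- when p + q = 1, the tampered observation carries no information. -/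
theorem stmt_8 {Ω' : Type*} [MeasurableSpace Ω'] (μ : Measure Ω') [IsProbabilityMeasure μ]
    (ω : Ω' → ℝ) (hω : Measurable ω)
    (F : ℝ → ℝ) (hF : ∀ t, (μ {a | ω a ≤ t}).toReal = F t)
    (y c : ℝ)
    (s0 : Ω' → ℝ) (hs0 : ∀ a, s0 a = if y + ω a ≤ c then 1 else 0)
    (p q : ℝ) (hp : p ∈ Set.Icc (0 : ℝ) 1) (hq : q ∈ Set.Icc (0 : ℝ) 1)
    (hpq : p + q = 1)
    (s : Ω' → ℝ) (hs : Measurable s) (hsval : ∀ a, s a = 0 ∨ s a = 1)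
    (hchan10 : (μ {a | s a = 0 ∧ s0 a = 1}).toReal = p * (μ {a | s0 a = 1}).toReal)
    (hchan11 : (μ {a | s a = 1 ∧ s0 a = 1}).toReal = (1 - p) * (μ {a | s0 a = 1}).toReal)
    (hchan01 : (μ {a | s a = 1 ∧ s0 a = 0}).toReal = q * (μ {a | s0 a = 0}).toReal)
    (hchan00 : (μ {a | s a = 0 ∧ s0 a = 0}).toReal = (1 - q) * (μ {a | s0 a = 0}).toReal) :
    (μ {a | s a = 1}).toReal = q :=
  stmt_8_general μ ω hω y c s0 hs0 p q hpq s hchan11 hchan01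
end

section
/- Consider a probability space with a filtration (F_k)_{k≥0}, a convex compact set Ω ⊆ ℝ^p with metric projection Π_Ω and η = sup_{w∈Ω}‖w‖, a true parameter θ ∈ Ω, constants p, q ∈ [0,1] with p + q ≠ 1, a gain β > 0, a cumulative distribution function F differentiable with density f satisfying f̲ := inf_{|x| ≤ 2Mη} f(x) > 0, and an adapted sequence of ℝ^p-valued regressors φ_k with φ_k F_{k−1}-measurable, sup_k ‖φ_k‖ ≤ M < ∞, and such that there exist an integer h ≥ p and δ_φ > 0 with (1/h) 𝔼[ ∑_{l=k}^{k+h−1} φ_l φ_lᵀ | F_{k−1} ] ≥ δ_φ I for all k ≥ 1 (in the positive-semidefinite order). Let (b_k) be a positive monotonically decreasing step-size sequence with ∑_{k=1}^∞ b_k = ∞, b_k → 0, and b_k = O(b_{k+1}). Let the estimates be generated by θ̂_1 ∈ Ω, s̃_k = β (1 − (p + q)) ( (1 − (p + q)) F(0) + q − s_k ), θ̂_{k+1} = Π_Ω( θ̂_k + b_k φ_k s̃_k ), where s_k ∈ {0,1} is F_k-measurable with 𝔼[s_k | F_{k−1}] = (1 − (p + q)) F(φ_kᵀθ̂_k − φ_kᵀθ)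 + q. Then lim_{k→∞} 𝔼 ‖θ̂_k − θ‖² = 0. -/
open MeasureTheory Filter Set

section Helpers

variable {E : Type*} [NormedAddCommGroup E] [InnerProductSpace ℝ E]

/-- projection onto convex set is contracting towards points of the set -/
lemma aux_proj_contract {K : Set E} (hconv : Convex ℝ K)
    (proj : E → E) (hproj : ∀ x, proj x ∈ K ∧ ∀ w ∈ K, ‖x - proj x‖ ≤ ‖x - w‖)
    {w : E} (hw : w ∈ K) (x : E) : ‖proj x - w‖ ≤ ‖x - w‖ := by
  have hv : proj x ∈ K := (hproj x).1
  have hinf : ‖x - proj x‖ = ⨅ z : K, ‖x - z‖ := by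
    haveI : Nonempty K := ⟨⟨proj x, hv⟩⟩
    apply le_antisymm
    · exact le_ciInf fun z => (hproj x).2 z z.2
    · exact ciInf_le ⟨0, fun _ ⟨_, h⟩ => h ▸ norm_nonneg _⟩ (⟨proj x, hv⟩ : K)
  have hkey : ∀ z ∈ K, inner ℝ (x - proj x) (z - proj x) ≤ (0:ℝ) :=
    (norm_eq_iInf_iff_real_inner_le_zero hconv hv).1 hinf
  have h1 := hkey w hw
  have hexp : ‖x - w‖^2 = ‖x - proj x‖^2 + 2 * inner ℝ (x - proj x) (proj x - w) + ‖proj x - w‖^2 := by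
    have h3 : x - w = (x - proj x) + (proj x - w) := by abel
    rw [h3, norm_add_sq_real]
  have h4 : (inner ℝ (x - proj x) (proj x - w) : ℝ) = -(inner ℝ (x - proj x) (w - proj x) : ℝ) := by
    rw [← inner_neg_right]; congr 1; abel
  nlinarith [norm_nonneg (x - proj x), norm_nonneg (proj x - w), norm_nonneg (x - w),
    sq_nonneg (‖x - proj x‖)]

/-- MVT inequality: x * (F 0 - F x) ≤ -c * x^2 when the derivative is ≥ c on the interval. -/
lemma aux_mvt_ineq {F f : ℝ → ℝ} (hF : ∀ t, HasDerivAt F (f t) t)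
    {L c : ℝ} (hc : ∀ y ∈ Set.Icc (-L) L, c ≤ f y) {x : ℝ} (hx : |x| ≤ L) :
    x * (F 0 - F x) ≤ -c * x^2 := by
  have hcont : ∀ s : Set ℝ, ContinuousOn F s := fun s =>
    fun t _ => (hF t).continuousAt.continuousWithinAt
  rcases lt_trichotomy x 0 with hx0 | hx0 | hx0
  · obtain ⟨ξ, hξ, hslope⟩ := exists_hasDerivAt_eq_slope F f hx0 (hcont _) (fun y _ => hF y)
    have hFx : F 0 - F x = f ξ * (0 - x) := by
      rw [eq_div_iff (by linarith : (0:ℝ) - x ≠ 0)] at hslope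
      linarith [hslope]
    have hξmem : ξ ∈ Set.Icc (-L) L := by
      rcases abs_le.1 hx with ⟨h1, h2⟩
      exact ⟨le_of_lt (lt_of_le_of_lt h1 hξ.1), le_trans (le_of_lt hξ.2) (by linarith [abs_nonneg x])⟩
    have := hc ξ hξmem
    nlinarith [sq_nonneg x]
  · simp [hx0]
  · obtain ⟨ξ, hξ, hslope⟩ := exists_hasDerivAt_eq_slope F f hx0 (hcont _) (fun y _ => hF y)
    have hFx : F x - F 0 = f ξ * (x - 0) := by
      rw [eq_div_iff (by linarith : x - (0:ℝ) ≠ 0)] at hslope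
      linarith [hslope]
    have hξmem : ξ ∈ Set.Icc (-L) L := by
      rcases abs_le.1 hx with ⟨h1, h2⟩
      exact ⟨le_trans (by linarith [abs_nonneg x]) (le_of_lt hξ.1), le_trans (le_of_lt hξ.2) h2⟩
    have := hc ξ hξmem
    nlinarith [sq_nonneg x]

end Helpers

/-- perturbed contraction recursion tends to zero -/
lemma aux_rec_tendsto {u βs : ℕ → ℝ} {c K : ℝ} (hc : 0 < c) (hK : 0 ≤ K)
    (hu : ∀ j, 0 ≤ u j) (hβpos : ∀ j, 0 < βs j) (hβ0 : Tendsto βs atTop (nhds 0))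
    (hβsum : Tendsto (fun n => ∑ j ∈ Finset.range n, βs j) atTop atTop)
    (hrec : ∀ j, u (j+1) ≤ u j - c * βs j * u j + K * βs j ^ 2) :
    Tendsto u atTop (nhds 0) := by
  rw [Metric.tendsto_atTop]
  intro ε hε
  set A : ℝ := c * (ε/2) / 2 with hAdef
  have hA : 0 < A := by positivity
  set δ : ℝ := min (A / (K + 1)) (1 / c) with hδdef
  have hδpos : 0 < δ := lt_min (by positivity) (by positivity)
  obtain ⟨N, hN⟩ : ∃ N, ∀ j ≥ N, βs j ≤ δ := by
    obtain ⟨N, hN⟩ := Metric.tendsto_atTop.1 hβ0 δ hδpos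
    exact ⟨N, fun j hj => by
      have := hN j hj
      rw [Real.dist_eq, sub_zero] at this
      exact le_of_lt (lt_of_abs_lt this)⟩
  have hKb : ∀ j ≥ N, K * βs j ^ 2 ≤ A * βs j := by
    intro j hj
    have h1 : βs j ≤ δ := hN j hj
    have hδ1 : δ ≤ A / (K + 1) := min_le_left _ _
    have h5 : K * (A / (K+1)) ≤ A := by
      rw [show K * (A/(K+1)) = A*K/(K+1) by ring, div_le_iff₀ (by linarith : (0:ℝ) < K+1)]
      nlinarith
    have h2 : K * βs j ≤ A := by
      calc K * βs j ≤ K * δ := by nlinarith [hβpos j]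
      _ ≤ K * (A / (K+1)) := by nlinarith
      _ ≤ A := h5
    nlinarith [hβpos j]
  -- step 1: there exists j₀ ≥ N with u j₀ < ε/2
  have hstep1 : ∃ j₀ ≥ N, u j₀ < ε / 2 := by
    by_contra hcon
    push_neg at hcon
    have hdec : ∀ t : ℕ, u (N + t) ≤ u N - A * ∑ j ∈ Finset.Ico N (N + t), βs j := by
      intro t
      induction t with
      | zero => simp
      | succ t ih =>
        have hj : N ≤ N + t := Nat.le_add_right N t
        have huj : ε / 2 ≤ u (N + t) := hcon (N + t) hj
        have hr := hrec (N + t)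
        have hKb' := hKb (N + t) hj
        have h1 : c * βs (N + t) * (ε/2) ≤ c * βs (N + t) * u (N + t) :=
          mul_le_mul_of_nonneg_left huj (mul_nonneg hc.le (hβpos _).le)
        have hstep : u (N + t + 1) ≤ u (N + t) - A * βs (N + t) := by
          rw [hAdef]; nlinarith [hβpos (N + t)]
        have hsum : ∑ j ∈ Finset.Ico N (N + t + 1), βs j
            = (∑ j ∈ Finset.Ico N (N + t), βs j) + βs (N + t) :=
          Finset.sum_Ico_succ_top hj _
        rw [show N + (t+1) = N + t + 1 from rfl, hsum]
        linarith
    have hdiv : Tendsto (fun t => ∑ j ∈ Finset.Ico N (N + t), βs j) atTop atTop := by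
      have heq : ∀ t, ∑ j ∈ Finset.Ico N (N + t), βs j
          = (∑ j ∈ Finset.range (N + t), βs j) + -(∑ j ∈ Finset.range N, βs j) := by
        intro t
        rw [Finset.sum_Ico_eq_sub _ (Nat.le_add_right N t)]; ring
      simp_rw [heq]
      apply tendsto_atTop_add_const_right
      exact hβsum.comp (tendsto_atTop_mono (fun t => Nat.le_add_left t N) tendsto_id)
    obtain ⟨T, hT⟩ := (tendsto_atTop.1 hdiv ((u N + 1) / A)).exists
    have h6 : u (N + T) ≤ u N - A * ((u N + 1) / A) := by
      nlinarith [hdec T, hT]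
    rw [mul_div_cancel₀ _ (ne_of_gt hA)] at h6
    linarith [hu (N + T)]
  obtain ⟨j₀, hj₀N, hj₀⟩ := hstep1
  refine ⟨j₀, fun j hj => ?_⟩
  rw [Real.dist_eq, sub_zero, abs_of_nonneg (hu j)]
  have hinv : ∀ t : ℕ, j₀ ≤ t → u t < ε := by
    intro t ht
    induction t, ht using Nat.le_induction with
    | base => linarith
    | succ t ht ih =>
      have htN : N ≤ t := le_trans hj₀N ht
      have hKb' := hKb t htN
      have hδc : βs t ≤ 1 / c := le_trans (hN t htN) (min_le_right _ _)
      have hr := hrec t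
      rcases lt_or_ge (u t) (ε/2) with hcase | hcase
      · have h1 : 0 ≤ c * βs t * u t :=
          mul_nonneg (mul_nonneg hc.le (hβpos t).le) (hu t)
        have h2 : A * βs t ≤ A * (1/c) := by nlinarith
        have h3 : A * (1/c) = ε / 4 := by rw [hAdef]; field_simp; ring
        nlinarith
      · have h1 : c * βs t * (ε/2) ≤ c * βs t * u t :=
          mul_le_mul_of_nonneg_left hcase (mul_nonneg hc.le (hβpos t).le)
        have h4 : 0 < A * βs t := mul_pos hA (hβpos t)
        rw [hAdef] at *
        nlinarith [hβpos t]
  exact hinv j hj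

/-- gluing residue classes -/
lemma aux_glue {V : ℕ → ℝ} {h : ℕ} (hh : 1 ≤ h)
    (H : ∀ r, 1 ≤ r → r ≤ h → Tendsto (fun j => V (r + j * h)) atTop (nhds 0)) :
    Tendsto V atTop (nhds 0) := by
  rw [Metric.tendsto_atTop]
  intro ε hε
  have Hc : ∀ r ∈ Finset.Icc 1 h, ∃ N, ∀ j ≥ N, dist (V (r + j * h)) 0 < ε := by
    intro r hr
    rw [Finset.mem_Icc] at hr
    exact Metric.tendsto_atTop.1 (H r hr.1 hr.2) ε hε
  choose! Ns hNs using Hc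
  set J : ℕ := (Finset.Icc 1 h).sup Ns with hJ
  refine ⟨h * J + h + 1, fun k hk => ?_⟩
  have hk1 : 1 ≤ k := le_trans (by omega) hk
  set r : ℕ := (k - 1) % h + 1 with hr
  set j : ℕ := (k - 1) / h with hjdef
  have h0 : h * j + (k-1) % h = k - 1 := Nat.div_add_mod (k - 1) h
  have hkey : r + j * h = k := by
    calc r + j * h = h * j + (k-1) % h + 1 := by rw [hr]; ring
    _ = (k - 1) + 1 := by rw [h0]
    _ = k := Nat.succ_pred_eq_of_pos hk1
  have hrmem : r ∈ Finset.Icc 1 h := by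
    rw [Finset.mem_Icc]
    refine ⟨by omega, ?_⟩
    have := Nat.mod_lt (k - 1) (show 0 < h by omega)
    omega
  have hjJ : J ≤ j := by
    have h1 : J * h ≤ k - 1 := by
      have h2 : h * J + h + 1 ≤ k := hk
      have h3 : J * h = h * J := Nat.mul_comm _ _
      omega
    rw [hjdef]
    exact (Nat.le_div_iff_mul_le (by omega : 0 < h)).2 h1
  have hd := hNs r hrmem j (le_trans (Finset.le_sup hrmem) hjJ)
  rwa [hkey] at hd

/-- coordinate bound in EuclideanSpace -/
lemma aux_coord {d : ℕ} (x : EuclideanSpace ℝ (Fin d)) (i : Fin d) : |x i| ≤ ‖x‖ := by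
  rw [EuclideanSpace.norm_eq]
  rw [show |x i| = Real.sqrt (|x i|^2) by rw [Real.sqrt_sq_eq_abs, abs_abs]]
  apply Real.sqrt_le_sqrt
  have : |x i|^2 = ‖x i‖^2 := by rw [Real.norm_eq_abs]
  rw [this]
  exact Finset.single_le_sum (f := fun j => ‖x j‖^2) (fun j _ => sq_nonneg _) (Finset.mem_univ i)


/-- bilinear expansion of the sum of squared inner products -/
lemma aux_expand {d h k : ℕ} (x : ℕ → EuclideanSpace ℝ (Fin d)) (v : EuclideanSpace ℝ (Fin d)) :
    ∑ l ∈ Finset.Ico k (k+h), (inner ℝ (x l) v : ℝ)^2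
    = ∑ p : Fin d × Fin d, (v p.1 * v p.2) * (∑ l ∈ Finset.Ico k (k+h), (x l p.1)*(x l p.2)) := by
  have h1 : ∀ l, (inner ℝ (x l) v : ℝ) = ∑ i, (x l i) * (v i) := fun l => by
    rw [PiLp.inner_apply]
    simp [RCLike.inner_apply, conj_trivial]; exact Finset.sum_congr rfl fun _ _ => mul_comm _ _
  calc ∑ l ∈ Finset.Ico k (k+h), (inner ℝ (x l) v : ℝ)^2
      = ∑ l ∈ Finset.Ico k (k+h),
          ∑ p : Fin d × Fin d, (v p.1*v p.2)*((x l p.1)*(x l p.2)) := by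
        refine Finset.sum_congr rfl fun l _ => ?_
        rw [h1 l, sq, Finset.sum_mul_sum, Fintype.sum_prod_type]
        refine Finset.sum_congr rfl fun i _ => Finset.sum_congr rfl fun j _ => by ring
  _ = ∑ p : Fin d × Fin d,
        ∑ l ∈ Finset.Ico k (k+h), (v p.1*v p.2)*((x l p.1)*(x l p.2)) := Finset.sum_comm
  _ = ∑ p : Fin d × Fin d, (v p.1 * v p.2) * (∑ l ∈ Finset.Ico k (k+h), (x l p.1)*(x l p.2)) := by
      refine Finset.sum_congr rfl fun p _ => ?_
      rw [Finset.mul_sum]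

set_option maxHeartbeats 1000000 in
/-- mean-square convergence of the recursive projection algorithm (Theorem 1). -/
theorem stmt_11 {Ω' : Type*} {m0 : MeasurableSpace Ω'}
    (μ : Measure Ω') [IsProbabilityMeasure μ] (𝓕 : Filtration ℕ m0)
    (d : ℕ) (Ωs : Set (EuclideanSpace ℝ (Fin d)))
    (hconv : Convex ℝ Ωs) (hcomp : IsCompact Ωs)
    (proj : EuclideanSpace ℝ (Fin d) → EuclideanSpace ℝ (Fin d))
    (hproj : ∀ x, proj x ∈ Ωs ∧ ∀ w ∈ Ωs, ‖x - proj x‖ ≤ ‖x - w‖)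
    (η : ℝ) (hη : IsLUB ((fun w => ‖w‖) '' Ωs) η)
    (θ : EuclideanSpace ℝ (Fin d)) (hθ : θ ∈ Ωs)
    (p q : ℝ) (hp : p ∈ Set.Icc (0 : ℝ) 1) (hq : q ∈ Set.Icc (0 : ℝ) 1)
    (hpq : p + q ≠ 1)
    (β : ℝ) (hβ : 0 < β) (M : ℝ) (hM : 0 < M)
    (F f : ℝ → ℝ) (hF : ∀ t, HasDerivAt F (f t) t)
    (hflpos : 0 < sInf (f '' Set.Icc (-(2 * M * η)) (2 * M * η)))
    (φ : ℕ → Ω' → EuclideanSpace ℝ (Fin d))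
    (hφmeas : ∀ k, 1 ≤ k → Measurable[𝓕 (k - 1)] (φ k))
    (hφbound : ∀ k a, 1 ≤ k → ‖φ k a‖ ≤ M)
    (h : ℕ) (hh : d ≤ h) (δφ : ℝ) (hδφ : 0 < δφ)
    (hPE : ∀ k, 1 ≤ k → ∀ v : EuclideanSpace ℝ (Fin d), ∀ᵐ a ∂μ,
      δφ * ‖v‖ ^ 2 ≤ (1 / (h : ℝ)) *
        (μ[fun a' => ∑ l ∈ Finset.Ico k (k + h), (inner ℝ (φ l a') v : ℝ) ^ 2|𝓕 (k - 1)]) a)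
    (b : ℕ → ℝ) (hbpos : ∀ k, 1 ≤ k → 0 < b k)
    (hbdec : ∀ k, 1 ≤ k → b (k + 1) ≤ b k)
    (hbsum : Tendsto (fun n => ∑ k ∈ Finset.Icc 1 n, b k) atTop atTop)
    (hb0 : Tendsto b atTop (nhds 0))
    (hbO : ∃ c : ℝ, ∀ k, 1 ≤ k → b k ≤ c * b (k + 1))
    (θhat : ℕ → Ω' → EuclideanSpace ℝ (Fin d))
    (hθhatmeas : ∀ k, 1 ≤ k → Measurable[𝓕 (k - 1)] (θhat k))
    (hθ1 : ∀ a, θhat 1 a ∈ Ωs)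
    (s : ℕ → Ω' → ℝ)
    (hsmeas : ∀ k, 1 ≤ k → Measurable[𝓕 k] (s k))
    (hsval : ∀ k a, s k a = 0 ∨ s k a = 1)
    (hscond : ∀ k, 1 ≤ k → ∀ᵐ a ∂μ,
      (μ[s k|𝓕 (k - 1)]) a =
        (1 - (p + q)) * F ((inner ℝ (φ k a) (θhat k a) : ℝ) - (inner ℝ (φ k a) θ : ℝ)) + q)
    (stil : ℕ → Ω' → ℝ)
    (hstil : ∀ k a, stil k a = β * (1 - (p + q)) * ((1 - (p + q)) * F 0 + q - s k a))
    (hrec : ∀ k a, 1 ≤ k → θhat (k + 1) a = proj (θhat k a + (b k * stil k a) • φ k a)) :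
    Tendsto (fun k => ∫ a, ‖θhat k a - θ‖ ^ 2 ∂μ) atTop (nhds 0) := by
  classical
  -- trivial case h = 0 (then d = 0 and everything is zero)
  rcases Nat.eq_zero_or_pos h with hh0 | hh1
  · have hd0 : d = 0 := by omega
    subst hd0
    have hz : ∀ x y : EuclideanSpace ℝ (Fin 0), x = y := by
      intro x y; ext i; exact absurd i.2 (by omega)
    have : ∀ k, ∫ a, ‖θhat k a - θ‖ ^ 2 ∂μ = 0 := by
      intro k
      have : ∀ a, ‖θhat k a - θ‖ ^ 2 = 0 := fun a => by
        rw [hz (θhat k a) θ, sub_self, norm_zero]; ring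
      simp only [this, integral_zero]
    simpa only [this] using tendsto_const_nhds
  -- main case
  have hm : ∀ k : ℕ, 𝓕 k ≤ m0 := fun k => 𝓕.le k
  have hΩb : ∀ w ∈ Ωs, ‖w‖ ≤ η := fun w hw => hη.1 ⟨w, hw, rfl⟩
  have hη0 : 0 ≤ η := le_trans (norm_nonneg θ) (hΩb θ hθ)
  have hmem : ∀ k, 1 ≤ k → ∀ a, θhat k a ∈ Ωs := by
    intro k hk
    induction k, hk using Nat.le_induction with
    | base => exact hθ1
    | succ k hk ih => intro a; rw [hrec k a hk]; exact (hproj _).1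
  have heb : ∀ k, 1 ≤ k → ∀ a, ‖θhat k a - θ‖ ≤ 2*η := by
    intro k hk a
    calc ‖θhat k a - θ‖ ≤ ‖θhat k a‖ + ‖θ‖ := norm_sub_le _ _
    _ ≤ η + η := add_le_add (hΩb _ (hmem k hk a)) (hΩb θ hθ)
    _ = 2*η := by ring
  set cβ := 1 - (p+q) with hcβdef
  have hcβ : cβ ≠ 0 := sub_ne_zero.2 (Ne.symm hpq)
  have hsb : ∀ k a, 0 ≤ s k a ∧ s k a ≤ 1 := by
    intro k a; rcases hsval k a with h' | h' <;> rw [h'] <;> norm_num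
  set S := β * |cβ| * (|cβ * F 0 + q| + 1) with hSdef
  have hS : 0 < S := by
    have : 0 < |cβ| := abs_pos.2 hcβ
    positivity
  have hstilb : ∀ k a, |stil k a| ≤ S := by
    intro k a
    rw [hstil k a, hSdef]
    rw [abs_mul, abs_mul, abs_of_pos hβ]
    have h1 : |cβ * F 0 + q - s k a| ≤ |cβ * F 0 + q| + 1 := by
      rcases hsb k a with ⟨h2, h3⟩
      have := abs_sub (cβ * F 0 + q) (s k a)
      have h4 : |s k a| ≤ 1 := abs_le.2 ⟨by linarith, h3⟩
      calc |cβ * F 0 + q - s k a| ≤ |cβ * F 0 + q| + |s k a| := abs_sub _ _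
      _ ≤ |cβ * F 0 + q| + 1 := by linarith
    have h5 : 0 ≤ β * |cβ| := by positivity
    calc β * |cβ| * |cβ * F 0 + q - s k a| ≤ β * |cβ| * (|cβ * F 0 + q| + 1) :=
      mul_le_mul_of_nonneg_left h1 h5
    _ = _ := rfl
  set L := 2*M*η with hLdef
  have hL0 : 0 ≤ L := by positivity
  set fl := sInf (f '' Set.Icc (-L) L) with hfldef
  have hfl : 0 < fl := hflpos
  have hfb : BddBelow (f '' Set.Icc (-L) L) := by
    by_contra hcon
    rw [hfldef] at hfl
    rw [Real.sInf_of_not_bddBelow hcon] at hfl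
    exact lt_irrefl _ hfl
  have hfge : ∀ y ∈ Set.Icc (-L) L, fl ≤ f y := fun y hy => csInf_le hfb ⟨y, hy, rfl⟩
  set Δ : ℕ → Ω' → ℝ := fun k a => (inner ℝ (φ k a) (θhat k a - θ) : ℝ) with hΔdef
  have hΔb : ∀ k, 1 ≤ k → ∀ a, |Δ k a| ≤ L := by
    intro k hk a
    calc |Δ k a| ≤ ‖φ k a‖ * ‖θhat k a - θ‖ := abs_real_inner_le_norm _ _
    _ ≤ M * (2*η) := mul_le_mul (hφbound k a hk) (heb k hk a) (norm_nonneg _) hM.le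
    _ = L := by rw [hLdef]; ring
  have hcontract : ∀ w ∈ Ωs, ∀ x, ‖proj x - w‖ ≤ ‖x - w‖ :=
    fun w hw x => aux_proj_contract hconv proj hproj hw x
  have hstepnorm : ∀ k, 1 ≤ k → ∀ a, ‖θhat (k+1) a - θhat k a‖ ≤ S * M * b k := by
    intro k hk a
    rw [hrec k a hk]
    calc ‖proj (θhat k a + (b k * stil k a) • φ k a) - θhat k a‖
        ≤ ‖θhat k a + (b k * stil k a) • φ k a - θhat k a‖ :=
          hcontract _ (hmem k hk a) _
    _ = ‖(b k * stil k a) • φ k a‖ := by congr 1; abel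
    _ = |b k * stil k a| * ‖φ k a‖ := by rw [norm_smul, Real.norm_eq_abs]
    _ ≤ (b k * S) * M := by
        apply mul_le_mul _ (hφbound k a hk) (norm_nonneg _) (mul_nonneg (hbpos k hk).le hS.le)
        rw [abs_mul, abs_of_pos (hbpos k hk)]
        exact mul_le_mul_of_nonneg_left (hstilb k a) (hbpos k hk).le
    _ = S * M * b k := by ring
  -- measurability and integrability
  have hθm : ∀ k, 1 ≤ k → Measurable[m0] (θhat k) :=
    fun k hk => (hθhatmeas k hk).mono (hm _) le_rfl
  have hφm : ∀ k, 1 ≤ k → Measurable[m0] (φ k) :=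
    fun k hk => (hφmeas k hk).mono (hm _) le_rfl
  have hsm' : ∀ k, 1 ≤ k → Measurable[m0] (s k) :=
    fun k hk => (hsmeas k hk).mono (hm _) le_rfl
  have hΔm : ∀ k, 1 ≤ k → Measurable[m0] (Δ k) :=
    fun k hk => Measurable.inner (hφm k hk) ((hθm k hk).sub measurable_const)
  have hbint : ∀ g : Ω' → ℝ, Measurable[m0] g → ∀ C : ℝ, (∀ a, |g a| ≤ C) → Integrable g μ := by
    intro g hg C hC
    exact (integrable_const C).mono' hg.aestronglyMeasurable
      (ae_of_all _ fun a => by rw [Real.norm_eq_abs]; exact hC a)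
  have hib : ∀ l, 1 ≤ l → ∀ k', 1 ≤ k' → ∀ a, |(inner ℝ (φ l a) (θhat k' a - θ) : ℝ)| ≤ L := by
    intro l hl k' hk' a
    calc |(inner ℝ (φ l a) (θhat k' a - θ) : ℝ)| ≤ ‖φ l a‖ * ‖θhat k' a - θ‖ :=
      abs_real_inner_le_norm _ _
    _ ≤ M * (2*η) := mul_le_mul (hφbound l a hl) (heb k' hk' a) (norm_nonneg _) hM.le
    _ = L := by rw [hLdef]; ring
  have hIint : ∀ l, 1 ≤ l → ∀ k', 1 ≤ k' →
      Integrable (fun a => (inner ℝ (φ l a) (θhat k' a - θ) : ℝ)^2) μ := by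
    intro l hl k' hk'
    apply hbint _ ((Measurable.inner (hφm l hl) ((hθm k' hk').sub measurable_const)).pow_const 2) (L^2)
    intro a
    rw [abs_pow]
    exact pow_le_pow_left₀ (abs_nonneg _) (hib l hl k' hk' a) 2
  set D : ℕ → ℝ := fun k => ∫ a, (Δ k a)^2 ∂μ with hDdef
  set V : ℕ → ℝ := fun k => ∫ a, ‖θhat k a - θ‖^2 ∂μ with hVdef
  have hVnonneg : ∀ k, 0 ≤ V k := fun k => integral_nonneg fun a => by positivity
  have hDnonneg : ∀ k, 0 ≤ D k := fun k => integral_nonneg fun a => sq_nonneg _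
  set c₀ := β * cβ^2 * fl with hc₀def
  have hcβ2 : 0 < cβ^2 := lt_of_le_of_ne (sq_nonneg cβ) (Ne.symm (pow_ne_zero 2 hcβ))
  have hc₀ : 0 < c₀ := by rw [hc₀def]; exact mul_pos (mul_pos hβ hcβ2) hfl
  set K₁ := S^2*M^2 with hK₁def
  have hK₁0 : 0 ≤ K₁ := by positivity
  have hstilm : ∀ k, 1 ≤ k → Measurable[m0] (stil k) := by
    intro k hk
    have : stil k = fun a => β*cβ*(cβ*F 0 + q - s k a) := funext (hstil k)
    rw [this]
    exact (measurable_const.sub (hsm' k hk)).const_mul _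
  have hFcont : Continuous F := continuous_iff_continuousAt.2 (fun t => (hF t).continuousAt)
  obtain ⟨CF, hCF⟩ : ∃ C, ∀ y ∈ Set.Icc (-L) L, |F y| ≤ C := by
    obtain ⟨C, hC⟩ := (isCompact_Icc (a := -L) (b := L)).exists_bound_of_continuousOn
      (hFcont.continuousOn)
    exact ⟨C, fun y hy => by have := hC y hy; rwa [Real.norm_eq_abs] at this⟩
  have hOneStep : ∀ k, 1 ≤ k → V (k+1) ≤ V k - 2*c₀*(b k)*(D k) + K₁*(b k)^2 := by
    intro k hk
    have hk1 : 1 ≤ k + 1 := by omega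
    have hmle : 𝓕 (k-1) ≤ m0 := hm (k-1)
    -- pointwise inequality
    have hpt : ∀ a, ‖θhat (k+1) a - θ‖^2
        ≤ ‖θhat k a - θ‖^2 + 2*(b k)*(stil k a * Δ k a) + K₁*(b k)^2 := by
      intro a
      rw [hrec k a hk]
      have h1 : ‖proj (θhat k a + (b k * stil k a) • φ k a) - θ‖
          ≤ ‖θhat k a + (b k * stil k a) • φ k a - θ‖ := hcontract θ hθ _
      have h2 : ‖θhat k a + (b k * stil k a) • φ k a - θ‖^2
          = ‖θhat k a - θ‖^2 + 2*((b k * stil k a) * Δ k a)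
            + (b k * stil k a)^2*‖φ k a‖^2 := by
        have h3 : θhat k a + (b k * stil k a) • φ k a - θ
            = (θhat k a - θ) + (b k * stil k a) • φ k a := by abel
        rw [h3, norm_add_sq_real, real_inner_smul_right, norm_smul, Real.norm_eq_abs,
          mul_pow, sq_abs]
        have h4 : (inner ℝ (θhat k a - θ) (φ k a) : ℝ) = Δ k a := real_inner_comm _ _
        rw [h4]
      have h5 : (b k * stil k a)^2*‖φ k a‖^2 ≤ K₁*(b k)^2 := by
        have h6 : |stil k a| ≤ S := hstilb k a
        have h7 : ‖φ k a‖ ≤ M := hφbound k a hk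
        have h8 : (stil k a)^2 ≤ S^2 := by nlinarith [sq_abs (stil k a), abs_nonneg (stil k a)]
        have h9 : ‖φ k a‖^2 ≤ M^2 := by nlinarith [norm_nonneg (φ k a)]
        have h9b : (stil k a)^2 * ‖φ k a‖^2 ≤ S^2*M^2 :=
          mul_le_mul h8 h9 (sq_nonneg _) (sq_nonneg S)
        rw [hK₁def]
        calc (b k * stil k a)^2*‖φ k a‖^2 = (b k)^2*((stil k a)^2*‖φ k a‖^2) := by ring
        _ ≤ (b k)^2*(S^2*M^2) := mul_le_mul_of_nonneg_left h9b (sq_nonneg _)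
        _ = S^2*M^2*(b k)^2 := by ring
      have h10 : ‖proj (θhat k a + (b k * stil k a) • φ k a) - θ‖^2
          ≤ ‖θhat k a + (b k * stil k a) • φ k a - θ‖^2 :=
        pow_le_pow_left₀ (norm_nonneg _) h1 2
      have h11 : 2*((b k * stil k a) * Δ k a) = 2*(b k)*(stil k a * Δ k a) := by ring
      rw [h2, h11] at h10
      linarith
    -- integrability facts
    have hint_e1 : Integrable (fun a => ‖θhat (k+1) a - θ‖^2) μ := by
      apply hbint _ (((hθm (k+1) hk1).sub measurable_const).norm.pow_const 2) ((2*η)^2)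
      intro a
      rw [abs_pow, abs_norm]
      exact pow_le_pow_left₀ (norm_nonneg _) (heb (k+1) hk1 a) 2
    have hint_e0 : Integrable (fun a => ‖θhat k a - θ‖^2) μ := by
      apply hbint _ (((hθm k hk).sub measurable_const).norm.pow_const 2) ((2*η)^2)
      intro a
      rw [abs_pow, abs_norm]
      exact pow_le_pow_left₀ (norm_nonneg _) (heb k hk a) 2
    have hintΔ : Integrable (Δ k) μ := hbint _ (hΔm k hk) L (hΔb k hk)
    have hsint : Integrable (s k) μ := by
      apply hbint _ (hsm' k hk) 1
      intro a
      rcases hsval k a with h' | h' <;> rw [h'] <;> norm_num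
    have hintΔs : Integrable (fun a => Δ k a * s k a) μ := by
      apply hbint _ ((hΔm k hk).mul (hsm' k hk)) (L*1)
      intro a
      simp only [Pi.mul_apply]; rw [abs_mul]
      rcases hsb k a with ⟨ha1, ha2⟩
      exact mul_le_mul (hΔb k hk a) (abs_le.2 ⟨by linarith, ha2⟩) (abs_nonneg _) hL0
    have hFΔm : Measurable[m0] (fun a => F (Δ k a)) := hFcont.measurable.comp (hΔm k hk)
    have hintΔF : Integrable (fun a => Δ k a * F (Δ k a)) μ := by
      apply hbint _ ((hΔm k hk).mul hFΔm) (L*CF)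
      intro a
      simp only [Pi.mul_apply]; rw [abs_mul]
      have hFa : |F (Δ k a)| ≤ CF := hCF _ (abs_le.1 (hΔb k hk a) |> fun hle => ⟨hle.1, hle.2⟩)
      exact mul_le_mul (hΔb k hk a) hFa (abs_nonneg _) hL0
    have hint_stilΔ : Integrable (fun a => stil k a * Δ k a) μ := by
      apply hbint _ ((hstilm k hk).mul (hΔm k hk)) (S*L)
      intro a
      simp only [Pi.mul_apply]; rw [abs_mul]
      exact mul_le_mul (hstilb k a) (hΔb k hk a) (abs_nonneg _) hS.le
    have hDint : Integrable (fun a => (Δ k a)^2) μ := by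
      apply hbint _ ((hΔm k hk).pow_const 2) (L^2)
      intro a
      rw [abs_pow]
      exact pow_le_pow_left₀ (abs_nonneg _) (hΔb k hk a) 2
    -- integrate the pointwise bound
    have hintsum1 : Integrable
        (fun a => ‖θhat k a - θ‖^2 + 2*(b k)*(stil k a * Δ k a) + K₁*(b k)^2) μ := by
      exact (hint_e0.add (hint_stilΔ.const_mul (2*(b k)))).add (integrable_const (K₁*(b k)^2))
    have hmono1 : V (k+1) ≤
        ∫ a, (‖θhat k a - θ‖^2 + 2*(b k)*(stil k a * Δ k a) + K₁*(b k)^2) ∂μ :=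
      integral_mono hint_e1 hintsum1 hpt
    have hI2 : Integrable (fun a => 2*(b k)*(stil k a * Δ k a)) μ := by
      exact hint_stilΔ.const_mul _
    have hI1 : Integrable (fun a => ‖θhat k a - θ‖^2 + 2*(b k)*(stil k a * Δ k a)) μ := by
      exact hint_e0.add hI2
    have hsplit1 : ∫ a, (‖θhat k a - θ‖^2 + 2*(b k)*(stil k a * Δ k a) + K₁*(b k)^2) ∂μ
        = V k + 2*(b k)*(∫ a, stil k a * Δ k a ∂μ) + K₁*(b k)^2 := by
      rw [integral_add hI1 (integrable_const _),
        integral_add hint_e0 hI2, integral_const_mul, integral_const]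
      simp [measure_univ]; rfl
    have h12 : V (k+1) ≤ V k + 2*(b k)*(∫ a, stil k a * Δ k a ∂μ) + K₁*(b k)^2 := by
      calc V (k+1) ≤ _ := hmono1
      _ = _ := hsplit1
    -- conditional expectation argument
    have hΔsm : StronglyMeasurable[𝓕 (k-1)] (Δ k) :=
      (Measurable.inner (hφmeas k hk) ((hθhatmeas k hk).sub measurable_const)).stronglyMeasurable
    have hpull : μ[fun a => Δ k a * s k a|𝓕 (k-1)] =ᵐ[μ] fun a => Δ k a * (μ[s k|𝓕 (k-1)]) a :=
      condExp_mul_of_stronglyMeasurable_left hΔsm hintΔs hsint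
    have htower : ∫ a, Δ k a * s k a ∂μ = ∫ a, Δ k a * ((μ[s k|𝓕 (k-1)]) a) ∂μ := by
      rw [← integral_condExp hmle (f := fun a => Δ k a * s k a)]
      exact integral_congr_ae hpull
    have hce : ∫ a, Δ k a * ((μ[s k|𝓕 (k-1)]) a) ∂μ
        = ∫ a, Δ k a * (cβ * F (Δ k a) + q) ∂μ := by
      apply integral_congr_ae
      filter_upwards [hscond k hk] with a ha
      rw [ha]
      have h13 : Δ k a = (inner ℝ (φ k a) (θhat k a) : ℝ) - (inner ℝ (φ k a) θ : ℝ) := by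
        rw [hΔdef]
        exact inner_sub_right _ _ _
      rw [h13]
    have e1 : ∫ a, Δ k a * (cβ * F (Δ k a) + q) ∂μ
        = cβ * (∫ a, Δ k a * F (Δ k a) ∂μ) + q * (∫ a, Δ k a ∂μ) := by
      rw [show (fun a => Δ k a * (cβ * F (Δ k a) + q))
          = fun a => cβ*(Δ k a * F (Δ k a)) + q*(Δ k a) from funext fun a => by ring]
      rw [integral_add (hintΔF.const_mul _) (hintΔ.const_mul _), integral_const_mul,
        integral_const_mul]
    have e2 : ∫ a, Δ k a * (F 0 - F (Δ k a)) ∂μ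
        = F 0 * (∫ a, Δ k a ∂μ) - ∫ a, Δ k a * F (Δ k a) ∂μ := by
      rw [show (fun a => Δ k a * (F 0 - F (Δ k a)))
          = fun a => F 0*(Δ k a) - Δ k a * F (Δ k a) from funext fun a => by ring]
      rw [integral_sub (hintΔ.const_mul _) hintΔF, integral_const_mul]
    have hexp : ∫ a, stil k a * Δ k a ∂μ
        = β * cβ^2 * (∫ a, Δ k a * (F 0 - F (Δ k a)) ∂μ) := by
      have hfun : (fun a => stil k a * Δ k a)
          = fun a => β*cβ*((cβ*F 0 + q)*(Δ k a) - Δ k a * (s k a)) :=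
        funext fun a => by rw [hstil k a]; ring
      rw [hfun, integral_const_mul, integral_sub (hintΔ.const_mul _) hintΔs, integral_const_mul,
        htower, hce, e1, e2]
      ring
    have hmvt : ∀ a, Δ k a * (F 0 - F (Δ k a)) ≤ -fl * (Δ k a)^2 :=
      fun a => aux_mvt_ineq hF hfge (hΔb k hk a)
    have hintΔF0 : Integrable (fun a => Δ k a * (F 0 - F (Δ k a))) μ := by
      rw [show (fun a => Δ k a * (F 0 - F (Δ k a)))
          = fun a => F 0*(Δ k a) - Δ k a * F (Δ k a) from funext fun a => by ring]
      exact (hintΔ.const_mul _).sub hintΔF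
    have hmono2 : ∫ a, Δ k a * (F 0 - F (Δ k a)) ∂μ ≤ -fl * D k := by
      have := integral_mono hintΔF0 (hDint.const_mul (-fl)) hmvt
      rwa [integral_const_mul] at this
    have hkey : ∫ a, stil k a * Δ k a ∂μ ≤ -c₀ * D k := by
      rw [hexp]
      have h14 : 0 ≤ β * cβ^2 := mul_nonneg hβ.le (sq_nonneg _)
      calc β * cβ^2 * (∫ a, Δ k a * (F 0 - F (Δ k a)) ∂μ)
          ≤ β * cβ^2 * (-fl * D k) := mul_le_mul_of_nonneg_left hmono2 h14
      _ = -c₀ * D k := by rw [hc₀def]; ring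
    have h15 : 2*(b k)*(∫ a, stil k a * Δ k a ∂μ) ≤ 2*(b k)*(-c₀ * D k) :=
      mul_le_mul_of_nonneg_left hkey (by linarith [hbpos k hk])
    calc V (k+1) ≤ V k + 2*(b k)*(∫ a, stil k a * Δ k a ∂μ) + K₁*(b k)^2 := h12
    _ ≤ V k + 2*(b k)*(-c₀ * D k) + K₁*(b k)^2 := by linarith
    _ = V k - 2*c₀*(b k)*(D k) + K₁*(b k)^2 := by ring
  have hEint : ∀ k', 1 ≤ k' → Integrable (fun a => ‖θhat k' a - θ‖^2) μ := by
    intro k' hk'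
    apply hbint _ (((hθm k' hk').sub measurable_const).norm.pow_const 2) ((2*η)^2)
    intro a
    rw [abs_pow, abs_norm]
    exact pow_le_pow_left₀ (norm_nonneg _) (heb k' hk' a) 2
  have hBlockLB : ∀ k, 1 ≤ k → (h:ℝ)*δφ*(V k) ≤
      ∫ a, (∑ l ∈ Finset.Ico k (k+h), (inner ℝ (φ l a) (θhat k a - θ) : ℝ)^2) ∂μ := by
    intro k hk
    have hmle : 𝓕 (k-1) ≤ m0 := hm (k-1)
    have hφcoordm : ∀ l, 1 ≤ l → ∀ i : Fin d, Measurable[m0] (fun a => φ l a i) := by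
      intro l hl i
      exact ((EuclideanSpace.proj (𝕜 := ℝ) i).continuous.measurable).comp (hφm l hl)
    have hcoordb : ∀ l a (i : Fin d), 1 ≤ l → |φ l a i| ≤ M :=
      fun l a i hl => le_trans (aux_coord _ _) (hφbound l a hl)
    set g : Fin d × Fin d → Ω' → ℝ :=
      fun p a => ∑ l ∈ Finset.Ico k (k+h), (φ l a p.1)*(φ l a p.2) with hgdef
    have hgm : ∀ p, Measurable[m0] (g p) := by
      intro p
      apply Finset.measurable_sum
      intro l hl
      have hl1 : 1 ≤ l := by rw [Finset.mem_Ico] at hl; omega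
      exact (hφcoordm l hl1 p.1).mul (hφcoordm l hl1 p.2)
    have hgb : ∀ p a, |g p a| ≤ (h:ℝ)*M^2 := by
      intro p a
      calc |g p a| ≤ ∑ l ∈ Finset.Ico k (k+h), |(φ l a p.1)*(φ l a p.2)| :=
        Finset.abs_sum_le_sum_abs _ _
      _ ≤ ∑ l ∈ Finset.Ico k (k+h), M^2 := by
          refine Finset.sum_le_sum fun l hl => ?_
          have hl1 : 1 ≤ l := by rw [Finset.mem_Ico] at hl; omega
          rw [abs_mul, sq]
          exact mul_le_mul (hcoordb l a p.1 hl1) (hcoordb l a p.2 hl1) (abs_nonneg _) hM.le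
      _ = (h:ℝ)*M^2 := by
          rw [Finset.sum_const, Nat.card_Ico, nsmul_eq_mul]
          congr 2
          omega
    have hgint : ∀ p, Integrable (g p) μ := fun p => hbint _ (hgm p) ((h:ℝ)*M^2) (hgb p)
    set A : Fin d × Fin d → Ω' → ℝ := fun p => μ[g p|𝓕 (k-1)] with hAdef
    have hAint : ∀ p, Integrable (A p) μ := fun p => integrable_condExp
    -- Claim 1: conditional expectation of the quadratic form
    have hC1 : ∀ v : EuclideanSpace ℝ (Fin d),
        (μ[fun a' => ∑ l ∈ Finset.Ico k (k + h), (inner ℝ (φ l a') v : ℝ) ^ 2|𝓕 (k - 1)])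
        =ᵐ[μ] fun a => ∑ p : Fin d × Fin d, (v p.1 * v p.2) * A p a := by
      intro v
      have hfun : (fun a' => ∑ l ∈ Finset.Ico k (k + h), (inner ℝ (φ l a') v : ℝ) ^ 2)
          = ∑ p : Fin d × Fin d, (v p.1 * v p.2) • (g p) := by
        funext a'
        rw [Finset.sum_apply]
        simp only [Pi.smul_apply, smul_eq_mul]
        exact aux_expand (fun l => φ l a') v
      rw [hfun]
      calc μ[∑ p : Fin d × Fin d, (v p.1 * v p.2) • (g p)|𝓕 (k - 1)]
          =ᵐ[μ] ∑ p : Fin d × Fin d, μ[(v p.1 * v p.2) • (g p)|𝓕 (k - 1)] :=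
            condExp_finsetSum (fun p _ => (hgint p).smul (v p.1 * v p.2)) (𝓕 (k - 1))
      _ =ᵐ[μ] ∑ p : Fin d × Fin d, (v p.1 * v p.2) • μ[g p|𝓕 (k - 1)] :=
            eventuallyEq_sum (fun p _ => condExp_smul (v p.1 * v p.2) (g p) (𝓕 (k - 1)))
      _ = fun a => ∑ p : Fin d × Fin d, (v p.1 * v p.2) * A p a := by
            funext a
            rw [Finset.sum_apply]
            simp [hAdef]
    -- Claim 2
    have hC2 : ∀ v : EuclideanSpace ℝ (Fin d), ∀ᵐ a ∂μ,
        δφ * ‖v‖^2 ≤ (1/(h:ℝ)) * ∑ p : Fin d × Fin d, (v p.1 * v p.2) * A p a := by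
      intro v
      filter_upwards [hPE k hk v, hC1 v] with a h1 h2
      rw [h2] at h1
      exact h1
    -- Claim 3: simultaneous in v, by density
    obtain ⟨T, hTc, hTd⟩ := TopologicalSpace.exists_countable_dense (EuclideanSpace ℝ (Fin d))
    have hC3 : ∀ᵐ a ∂μ, ∀ v : EuclideanSpace ℝ (Fin d),
        δφ * ‖v‖^2 ≤ (1/(h:ℝ)) * ∑ p : Fin d × Fin d, (v p.1 * v p.2) * A p a := by
      have hT := (ae_ball_iff hTc).2 (fun v _ => hC2 v)
      filter_upwards [hT] with a ha
      intro v
      have hcl : IsClosed {w : EuclideanSpace ℝ (Fin d) |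
          δφ * ‖w‖^2 ≤ (1/(h:ℝ)) * ∑ p : Fin d × Fin d, (w p.1 * w p.2) * A p a} := by
        apply isClosed_le
        · exact continuous_const.mul (continuous_norm.pow 2)
        · apply continuous_const.mul
          apply continuous_finset_sum
          intro p _
          exact ((EuclideanSpace.proj (𝕜 := ℝ) p.1).continuous.mul
            (EuclideanSpace.proj (𝕜 := ℝ) p.2).continuous).mul continuous_const
      have hsub : T ⊆ {w : EuclideanSpace ℝ (Fin d) |
          δφ * ‖w‖^2 ≤ (1/(h:ℝ)) * ∑ p : Fin d × Fin d, (w p.1 * w p.2) * A p a} :=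
        fun w hw => ha w hw
      have hclos := hcl.closure_subset_iff.2 hsub
      have hvmem : v ∈ closure T := by rw [hTd.closure_eq]; trivial
      exact hclos hvmem
    have key_ae : ∀ᵐ a ∂μ, δφ * ‖θhat k a - θ‖^2
        ≤ (1/(h:ℝ)) * ∑ p : Fin d × Fin d,
            (((θhat k a - θ) p.1) * ((θhat k a - θ) p.2)) * A p a := by
      filter_upwards [hC3] with a ha
      exact ha (θhat k a - θ)
    -- integrability of the terms
    have hecoordm : ∀ i : Fin d, Measurable[m0] (fun a => (θhat k a - θ) i) := by
      intro i
      exact ((EuclideanSpace.proj (𝕜 := ℝ) i).continuous.measurable).comp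
        ((hθm k hk).sub measurable_const)
    have hecoordb : ∀ a (i : Fin d), |(θhat k a - θ) i| ≤ 2*η :=
      fun a i => le_trans (aux_coord _ _) (heb k hk a)
    have heterm : ∀ p : Fin d × Fin d,
        Integrable (fun a => (((θhat k a - θ) p.1) * ((θhat k a - θ) p.2)) * A p a) μ := by
      intro p
      apply (hAint p).bdd_mul (c := (2*η)^2) (((hecoordm p.1).mul (hecoordm p.2)).aestronglyMeasurable)
      refine ae_of_all _ (fun a => ?_)
      rw [Real.norm_eq_abs, Pi.mul_apply, abs_mul, sq]
      exact mul_le_mul (hecoordb a p.1) (hecoordb a p.2) (abs_nonneg _) (by linarith)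
    have hIRHS : Integrable (fun a => (1/(h:ℝ)) * ∑ p : Fin d × Fin d,
        (((θhat k a - θ) p.1) * ((θhat k a - θ) p.2)) * A p a) μ := by
      exact (integrable_finset_sum _ (fun p _ => heterm p)).const_mul _
    have hILHS : Integrable (fun a => δφ * ‖θhat k a - θ‖^2) μ := (hEint k hk).const_mul _
    have h5 := integral_mono_ae hILHS hIRHS key_ae
    rw [integral_const_mul, integral_const_mul,
      integral_finset_sum _ (fun p _ => heterm p)] at h5
    -- pull-out for each p
    have hpull : ∀ p : Fin d × Fin d,
        ∫ a, (((θhat k a - θ) p.1) * ((θhat k a - θ) p.2)) * A p a ∂μ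
        = ∫ a, (((θhat k a - θ) p.1) * ((θhat k a - θ) p.2)) * g p a ∂μ := by
      intro p
      have hesm : StronglyMeasurable[𝓕 (k-1)]
          (fun a => ((θhat k a - θ) p.1) * ((θhat k a - θ) p.2)) := by
        have hco : ∀ i : Fin d, Measurable[𝓕 (k-1)] (fun a => (θhat k a - θ) i) := by
          intro i
          exact ((EuclideanSpace.proj (𝕜 := ℝ) i).continuous.measurable).comp
            ((hθhatmeas k hk).sub measurable_const)
        exact ((hco p.1).mul (hco p.2)).stronglyMeasurable
      have hfg : Integrable
          (fun a => (((θhat k a - θ) p.1) * ((θhat k a - θ) p.2)) * g p a) μ := by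
        apply hbint _ ((((hecoordm p.1).mul (hecoordm p.2))).mul (hgm p)) ((2*η)^2*((h:ℝ)*M^2))
        intro a
        simp only [Pi.mul_apply]; rw [abs_mul]
        apply mul_le_mul _ (hgb p a) (abs_nonneg _) (by positivity)
        rw [abs_mul, sq]
        exact mul_le_mul (hecoordb a p.1) (hecoordb a p.2) (abs_nonneg _) (by linarith)
      have hmul := condExp_mul_of_stronglyMeasurable_left hesm hfg (hgint p)
      calc ∫ a, (((θhat k a - θ) p.1) * ((θhat k a - θ) p.2)) * A p a ∂μ
          = ∫ a, (μ[fun a' => (((θhat k a' - θ) p.1) * ((θhat k a' - θ) p.2)) * g p a'|𝓕 (k-1)]) a ∂μ :=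
            (integral_congr_ae hmul).symm
      _ = ∫ a, (((θhat k a - θ) p.1) * ((θhat k a - θ) p.2)) * g p a ∂μ :=
            integral_condExp hmle
    -- assemble
    have hfgint : ∀ p : Fin d × Fin d, Integrable
        (fun a => (((θhat k a - θ) p.1) * ((θhat k a - θ) p.2)) * g p a) μ := by
      intro p
      apply hbint _ ((((hecoordm p.1).mul (hecoordm p.2))).mul (hgm p)) ((2*η)^2*((h:ℝ)*M^2))
      intro a
      simp only [Pi.mul_apply]; rw [abs_mul]
      apply mul_le_mul _ (hgb p a) (abs_nonneg _) (by positivity)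
      rw [abs_mul, sq]
      exact mul_le_mul (hecoordb a p.1) (hecoordb a p.2) (abs_nonneg _) (by linarith)
    have hfinal : ∑ p : Fin d × Fin d,
        ∫ a, (((θhat k a - θ) p.1) * ((θhat k a - θ) p.2)) * g p a ∂μ
        = ∫ a, (∑ l ∈ Finset.Ico k (k+h), (inner ℝ (φ l a) (θhat k a - θ) : ℝ)^2) ∂μ := by
      rw [← integral_finset_sum _ (fun p _ => hfgint p)]
      apply integral_congr_ae
      apply Filter.EventuallyEq.of_eq
      funext a
      exact (aux_expand (fun l => φ l a) (θhat k a - θ)).symm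
    have e1 : ∑ p : Fin d × Fin d,
        ∫ a, (((θhat k a - θ) p.1) * ((θhat k a - θ) p.2)) * A p a ∂μ
        = ∑ p : Fin d × Fin d,
        ∫ a, (((θhat k a - θ) p.1) * ((θhat k a - θ) p.2)) * g p a ∂μ :=
      Finset.sum_congr rfl fun p _ => hpull p
    have h7 : δφ * V k ≤ (1/(h:ℝ)) *
        ∫ a, (∑ l ∈ Finset.Ico k (k+h), (inner ℝ (φ l a) (θhat k a - θ) : ℝ)^2) ∂μ := by
      calc δφ * V k ≤ (1/(h:ℝ)) * ∑ p : Fin d × Fin d,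
          ∫ a, (((θhat k a - θ) p.1) * ((θhat k a - θ) p.2)) * A p a ∂μ := h5
      _ = (1/(h:ℝ)) * ∫ a, (∑ l ∈ Finset.Ico k (k+h),
            (inner ℝ (φ l a) (θhat k a - θ) : ℝ)^2) ∂μ := by rw [e1, hfinal]
    have hhpos : (0:ℝ) < (h:ℝ) := by exact_mod_cast hh1
    have h8 := mul_le_mul_of_nonneg_left h7 hhpos.le
    calc (h:ℝ)*δφ*(V k) = (h:ℝ)*(δφ*(V k)) := by ring
    _ ≤ (h:ℝ)*((1/(h:ℝ)) * ∫ a, (∑ l ∈ Finset.Ico k (k+h),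
          (inner ℝ (φ l a) (θhat k a - θ) : ℝ)^2) ∂μ) := h8
    _ = ∫ a, (∑ l ∈ Finset.Ico k (k+h), (inner ℝ (φ l a) (θhat k a - θ) : ℝ)^2) ∂μ := by
        field_simp
  set CD := M * ((h:ℝ) * (S*M)) with hCDdef
  have hCD0 : 0 ≤ CD := by positivity
  have hbmono : ∀ k, 1 ≤ k → ∀ l, k ≤ l → b l ≤ b k := by
    intro k hk l hl
    induction l, hl using Nat.le_induction with
    | base => exact le_refl _
    | succ l hl ih => exact le_trans (hbdec l (le_trans hk hl)) ih
  have hSumLB : ∀ k, 1 ≤ k →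
      ((h:ℝ)*δφ/2)*(V k) - ((h:ℝ)*CD^2)*(b k)^2 ≤ ∑ l ∈ Finset.Ico k (k+h), D l := by
    intro k hk
    have hdrift : ∀ l, k ≤ l → ∀ a, ‖θhat l a - θhat k a‖ ≤ ((l - k : ℕ):ℝ) * (S*M*(b k)) := by
      intro l hl
      induction l, hl using Nat.le_induction with
      | base => intro a; simp
      | succ l hl ih =>
        intro a
        have hl1 : 1 ≤ l := le_trans hk hl
        have hstep := hstepnorm l hl1 a
        have hbl : b l ≤ b k := hbmono k hk l hl
        have hcast : ((l + 1 - k : ℕ):ℝ) = ((l - k : ℕ):ℝ) + 1 := by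
          have : l + 1 - k = (l - k) + 1 := by omega
          rw [this]; push_cast; ring
        calc ‖θhat (l+1) a - θhat k a‖
            ≤ ‖θhat (l+1) a - θhat l a‖ + ‖θhat l a - θhat k a‖ := by
              have : θhat (l+1) a - θhat k a = (θhat (l+1) a - θhat l a) + (θhat l a - θhat k a) := by abel
              rw [this]; exact norm_add_le _ _
        _ ≤ S*M*(b l) + ((l - k : ℕ):ℝ) * (S*M*(b k)) := add_le_add hstep (ih a)
        _ ≤ S*M*(b k) + ((l - k : ℕ):ℝ) * (S*M*(b k)) := by
              have : S*M*(b l) ≤ S*M*(b k) :=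
                mul_le_mul_of_nonneg_left hbl (mul_nonneg hS.le hM.le)
              linarith
        _ = ((l + 1 - k : ℕ):ℝ) * (S*M*(b k)) := by rw [hcast]; ring
    have hlb : ∀ l ∈ Finset.Ico k (k+h),
        (1/2) * (∫ a, (inner ℝ (φ l a) (θhat k a - θ) : ℝ)^2 ∂μ) - CD^2*(b k)^2 ≤ D l := by
      intro l hl
      rw [Finset.mem_Ico] at hl
      have hl1 : 1 ≤ l := by omega
      have hpt : ∀ a, (1/2) * (inner ℝ (φ l a) (θhat k a - θ) : ℝ)^2 - CD^2*(b k)^2 ≤ (Δ l a)^2 := by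
        intro a
        have hxy : (inner ℝ (φ l a) (θhat k a - θ) : ℝ)
            = Δ l a + (inner ℝ (φ l a) (θhat k a - θhat l a) : ℝ) := by
          rw [hΔdef]
          simp only []
          rw [← inner_add_right]
          congr 1
          abel
        have hyb : |(inner ℝ (φ l a) (θhat k a - θhat l a) : ℝ)| ≤ CD * (b k) := by
          calc |(inner ℝ (φ l a) (θhat k a - θhat l a) : ℝ)|
              ≤ ‖φ l a‖ * ‖θhat k a - θhat l a‖ := abs_real_inner_le_norm _ _
          _ ≤ M * ((h:ℝ) * (S*M*(b k))) := by
              apply mul_le_mul (hφbound l a hl1) _ (norm_nonneg _) hM.le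
              rw [norm_sub_rev]
              calc ‖θhat l a - θhat k a‖ ≤ ((l - k : ℕ):ℝ) * (S*M*(b k)) := hdrift l hl.1 a
              _ ≤ (h:ℝ) * (S*M*(b k)) := by
                  apply mul_le_mul_of_nonneg_right _
                    (mul_nonneg (mul_nonneg hS.le hM.le) (hbpos k hk).le)
                  exact_mod_cast (by omega : l - k ≤ h)
          _ = CD * (b k) := by rw [hCDdef]; ring
        have hy2 : (inner ℝ (φ l a) (θhat k a - θhat l a) : ℝ)^2 ≤ CD^2*(b k)^2 := by
          have h0 := abs_nonneg (inner ℝ (φ l a) (θhat k a - θhat l a) : ℝ)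
          nlinarith [sq_abs (inner ℝ (φ l a) (θhat k a - θhat l a) : ℝ)]
        rw [hxy]
        nlinarith [sq_nonneg (Δ l a - (inner ℝ (φ l a) (θhat k a - θhat l a) : ℝ))]
      have hint1 := hIint l hl1 k hk
      have hint2 : Integrable (fun a => (Δ l a)^2) μ := hIint l hl1 l hl1
      have hmono := integral_mono ((hint1.const_mul (1/2)).sub (integrable_const (CD^2*(b k)^2)))
        hint2 hpt
      have hsplit : ∫ a, ((1/2) * (inner ℝ (φ l a) (θhat k a - θ) : ℝ)^2 - CD^2*(b k)^2) ∂μ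
          = (1/2) * (∫ a, (inner ℝ (φ l a) (θhat k a - θ) : ℝ)^2 ∂μ) - CD^2*(b k)^2 := by
        rw [integral_sub (hint1.const_mul (1/2)) (integrable_const _), integral_const_mul,
          integral_const]
        simp [measure_univ]
      rw [← hsplit]
      exact hmono
    have hsum := Finset.sum_le_sum hlb
    have hintsum : ∫ a, (∑ l ∈ Finset.Ico k (k+h), (inner ℝ (φ l a) (θhat k a - θ) : ℝ)^2) ∂μ
        = ∑ l ∈ Finset.Ico k (k+h), ∫ a, (inner ℝ (φ l a) (θhat k a - θ) : ℝ)^2 ∂μ :=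
      integral_finset_sum _ (fun l hl => hIint l (by rw [Finset.mem_Ico] at hl; omega) k hk)
    have hcard : (Finset.Ico k (k+h)).card = h := by rw [Nat.card_Ico]; omega
    have hsumsplit : ∑ l ∈ Finset.Ico k (k+h),
        ((1/2) * (∫ a, (inner ℝ (φ l a) (θhat k a - θ) : ℝ)^2 ∂μ) - CD^2*(b k)^2)
        = (1/2) * (∑ l ∈ Finset.Ico k (k+h), ∫ a, (inner ℝ (φ l a) (θhat k a - θ) : ℝ)^2 ∂μ)
          - (h:ℝ)*(CD^2*(b k)^2) := by
      rw [Finset.sum_sub_distrib, Finset.sum_const, hcard, nsmul_eq_mul, ← Finset.mul_sum]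
    have hBL := hBlockLB k hk
    rw [hintsum] at hBL
    rw [hsumsplit] at hsum
    have : ((h:ℝ)*δφ/2)*(V k) ≤ (1/2) * (∑ l ∈ Finset.Ico k (k+h),
        ∫ a, (inner ℝ (φ l a) (θhat k a - θ) : ℝ)^2 ∂μ) := by linarith
    calc ((h:ℝ)*δφ/2)*(V k) - ((h:ℝ)*CD^2)*(b k)^2
        ≤ (1/2) * (∑ l ∈ Finset.Ico k (k+h), ∫ a, (inner ℝ (φ l a) (θhat k a - θ) : ℝ)^2 ∂μ)
          - (h:ℝ)*(CD^2*(b k)^2) := by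
          have heq : ((h:ℝ)*CD^2)*(b k)^2 = (h:ℝ)*(CD^2*(b k)^2) := by ring
          linarith [heq]
    _ ≤ ∑ l ∈ Finset.Ico k (k+h), D l := hsum
  -- step size facts
  obtain ⟨c, hc⟩ := hbO
  set c₁ := max c 1 with hc₁def
  have hc₁1 : 1 ≤ c₁ := le_max_right _ _
  have hc₁pos : 0 < c₁ := lt_of_lt_of_le one_pos hc₁1
  have hc₁h : 0 < c₁^h := pow_pos hc₁pos h
  have hblow : ∀ k, 1 ≤ k → ∀ j, j ≤ h → b k / c₁^h ≤ b (k+j) := by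
    intro k hk j hj
    have key : ∀ i : ℕ, b k ≤ c₁^i * b (k+i) := by
      intro i
      induction i with
      | zero => simp
      | succ i ih =>
        have h1 : b (k+i) ≤ c₁ * b (k+i+1) := by
          have h2 := hc (k+i) (by omega)
          have h3 : c ≤ c₁ := le_max_left _ _
          have h4 : 0 < b (k+i+1) := hbpos _ (by omega)
          nlinarith
        calc b k ≤ c₁^i * b (k+i) := ih
        _ ≤ c₁^i * (c₁ * b (k+i+1)) := by
            apply mul_le_mul_of_nonneg_left h1 (by positivity)
        _ = c₁^(i+1) * b (k+i+1) := by ring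
    have h5 := key j
    have h6 : c₁^j ≤ c₁^h := pow_le_pow_right₀ (by linarith) hj
    have h7 : 0 < b (k+j) := hbpos _ (by omega)
    rw [div_le_iff₀ hc₁h]
    calc b k ≤ c₁^j * b (k+j) := h5
    _ ≤ c₁^h * b (k+j) := mul_le_mul_of_nonneg_right h6 h7.le
    _ = b (k+j) * c₁^h := by ring
  have hbb1 : ∀ k, 1 ≤ k → b k ≤ b 1 := fun k hk => hbmono 1 le_rfl k hk
  -- block recursion
  set c₂ := c₀*(h:ℝ)*δφ/c₁^h with hc₂def
  set K₃ := K₁*(h:ℝ) + 2*c₀*((h:ℝ)*CD^2)*(b 1)/c₁^h with hK₃def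
  have hh1' : (1:ℝ) ≤ (h:ℝ) := by exact_mod_cast hh1
  have hc₂pos : 0 < c₂ := by
    rw [hc₂def]
    apply div_pos _ hc₁h
    exact mul_pos (mul_pos hc₀ (by linarith : (0:ℝ) < (h:ℝ))) hδφ
  have hK₃0 : 0 ≤ K₃ := by
    rw [hK₃def]
    have hb1 : 0 < b 1 := hbpos 1 le_rfl
    have h1 : 0 ≤ K₁*(h:ℝ) := mul_nonneg hK₁0 (Nat.cast_nonneg h)
    have h2 : 0 ≤ 2*c₀*((h:ℝ)*CD^2)*(b 1) :=
      mul_nonneg (mul_nonneg (by linarith) (mul_nonneg (Nat.cast_nonneg h) (sq_nonneg CD))) hb1.le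
    exact add_nonneg h1 (div_nonneg h2 hc₁h.le)
  have hblock : ∀ k, 1 ≤ k → V (k+h) ≤ V k - c₂*(b k)*(V k) + K₃*(b k)^2 := by
    intro k hk
    have htele : ∀ j : ℕ, V (k+j) ≤
        V k + ∑ l ∈ Finset.Ico k (k+j), (-(2*c₀*(b l)*(D l)) + K₁*(b l)^2) := by
      intro j
      induction j with
      | zero => simp
      | succ j ih =>
        have hkj : 1 ≤ k + j := by omega
        have h1 := hOneStep (k+j) hkj
        have hsum : ∑ l ∈ Finset.Ico k (k+j+1), (-(2*c₀*(b l)*(D l)) + K₁*(b l)^2)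
            = (∑ l ∈ Finset.Ico k (k+j), (-(2*c₀*(b l)*(D l)) + K₁*(b l)^2))
              + (-(2*c₀*(b (k+j))*(D (k+j))) + K₁*(b (k+j))^2) :=
          Finset.sum_Ico_succ_top (by omega) _
        rw [show k + (j+1) = (k+j)+1 from rfl, hsum]
        linarith
    have h2 := htele h
    set Bm := b k / c₁^h with hBm
    have hBm0 : 0 ≤ Bm := div_nonneg (hbpos k hk).le hc₁h.le
    have hterm : ∀ l ∈ Finset.Ico k (k+h), (-(2*c₀*(b l)*(D l)) + K₁*(b l)^2)
        ≤ (-(2*c₀*Bm*(D l)) + K₁*(b k)^2) := by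
      intro l hl
      rw [Finset.mem_Ico] at hl
      have hbl : Bm ≤ b l := by
        obtain ⟨j, hj, rfl⟩ : ∃ j, j ≤ h ∧ l = k + j := ⟨l - k, by omega, by omega⟩
        exact hblow k hk j hj
      have hbl2 : b l ≤ b k := hbmono k hk l hl.1
      have hblpos : 0 < b l := hbpos l (by omega)
      have hD := hDnonneg l
      have h3 : 2*c₀*Bm*(D l) ≤ 2*c₀*(b l)*(D l) :=
        mul_le_mul_of_nonneg_right
          (mul_le_mul_of_nonneg_left hbl (by linarith)) hD
      have h4 : K₁*(b l)^2 ≤ K₁*(b k)^2 :=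
        mul_le_mul_of_nonneg_left (pow_le_pow_left₀ hblpos.le hbl2 2) hK₁0
      linarith
    have hsum2 := Finset.sum_le_sum hterm
    have hcard : (Finset.Ico k (k+h)).card = h := by rw [Nat.card_Ico]; omega
    have hsum3 : ∑ l ∈ Finset.Ico k (k+h), (-(2*c₀*Bm*(D l)) + K₁*(b k)^2)
        = -(2*c₀*Bm*(∑ l ∈ Finset.Ico k (k+h), D l)) + (h:ℝ)*(K₁*(b k)^2) := by
      rw [Finset.sum_add_distrib, Finset.sum_const, hcard, nsmul_eq_mul]
      congr 1
      calc ∑ l ∈ Finset.Ico k (k+h), -(2*c₀*Bm*(D l))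
          = ∑ l ∈ Finset.Ico k (k+h), (-(2*c₀*Bm))*(D l) :=
            Finset.sum_congr rfl (fun l _ => by ring)
      _ = (-(2*c₀*Bm))*(∑ l ∈ Finset.Ico k (k+h), D l) := (Finset.mul_sum _ _ _).symm
      _ = _ := by ring
    have hT := hSumLB k hk
    have h5 : 0 ≤ 2*c₀*Bm := mul_nonneg (by linarith) hBm0
    have h6 : -(2*c₀*Bm*(∑ l ∈ Finset.Ico k (k+h), D l))
        ≤ -(2*c₀*Bm*(((h:ℝ)*δφ/2)*(V k) - ((h:ℝ)*CD^2)*(b k)^2)) := by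
      have := mul_le_mul_of_nonneg_left hT h5
      linarith
    have heq1 : 2*c₀*Bm*(((h:ℝ)*δφ/2)*(V k)) = c₂*(b k)*(V k) := by
      rw [hBm, hc₂def]
      field_simp
    have h7 : Bm ≤ b 1 / c₁^h := by
      rw [hBm]
      gcongr
      exact hbb1 k hk
    have h8 : 2*c₀*Bm*(((h:ℝ)*CD^2)*(b k)^2) ≤ (2*c₀*((h:ℝ)*CD^2)*(b 1)/c₁^h)*(b k)^2 := by
      have h9 : 0 ≤ ((h:ℝ)*CD^2)*(b k)^2 :=
        mul_nonneg (mul_nonneg (Nat.cast_nonneg h) (sq_nonneg CD)) (sq_nonneg _)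
      have h10 : 2*c₀*Bm*(((h:ℝ)*CD^2)*(b k)^2) ≤ 2*c₀*(b 1/c₁^h)*(((h:ℝ)*CD^2)*(b k)^2) := by
        have h11 : 2*c₀*Bm ≤ 2*c₀*(b 1/c₁^h) := mul_le_mul_of_nonneg_left h7 (by linarith)
        exact mul_le_mul_of_nonneg_right h11 h9
      calc 2*c₀*Bm*(((h:ℝ)*CD^2)*(b k)^2) ≤ 2*c₀*(b 1/c₁^h)*(((h:ℝ)*CD^2)*(b k)^2) := h10
      _ = (2*c₀*((h:ℝ)*CD^2)*(b 1)/c₁^h)*(b k)^2 := by field_simp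
    have hK₃eq : K₃*(b k)^2 = K₁*(h:ℝ)*(b k)^2 + (2*c₀*((h:ℝ)*CD^2)*(b 1)/c₁^h)*(b k)^2 := by
      rw [hK₃def]; ring
    calc V (k+h) ≤ V k + (-(2*c₀*Bm*(∑ l ∈ Finset.Ico k (k+h), D l)) + (h:ℝ)*(K₁*(b k)^2)) := by
          rw [← hsum3]; linarith
    _ ≤ V k + (-(2*c₀*Bm*(((h:ℝ)*δφ/2)*(V k) - ((h:ℝ)*CD^2)*(b k)^2)) + (h:ℝ)*(K₁*(b k)^2)) := by
          linarith
    _ = V k - c₂*(b k)*(V k) + (2*c₀*Bm*(((h:ℝ)*CD^2)*(b k)^2) + (h:ℝ)*(K₁*(b k)^2)) := by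
          rw [← heq1]; ring
    _ ≤ V k - c₂*(b k)*(V k) + K₃*(b k)^2 := by
          rw [hK₃eq]; linarith
  have hres : ∀ r, 1 ≤ r → r ≤ h → Tendsto (fun j => V (r + j*h)) atTop (nhds 0) := by
    intro r hr1 hrh
    have hidx : ∀ j : ℕ, 1 ≤ r + j*h := fun j => le_trans hr1 (Nat.le_add_right r (j*h))
    have hjle : ∀ j : ℕ, j ≤ r + j*h := by
      intro j
      calc j ≤ j*h := Nat.le_mul_of_pos_right j hh1
      _ ≤ r + j*h := Nat.le_add_left _ _
    apply aux_rec_tendsto (c := c₂) (K := K₃) hc₂pos hK₃0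
    · exact fun j => hVnonneg _
    · exact fun j => hbpos _ (hidx j)
    · exact hb0.comp (tendsto_atTop_mono hjle tendsto_id)
    · -- divergence of the subsampled series
      have hIcoBound : ∀ n : ℕ, ∑ k' ∈ Finset.Ico r (r + n*h), b k'
          ≤ (h:ℝ) * ∑ j ∈ Finset.range n, b (r + j*h) := by
        intro n
        induction n with
        | zero => simp
        | succ n ih =>
          have hsplit : ∑ k' ∈ Finset.Ico r (r + (n+1)*h), b k'
              = (∑ k' ∈ Finset.Ico r (r + n*h), b k')
                + ∑ k' ∈ Finset.Ico (r + n*h) (r + n*h + h), b k' := by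
            rw [show r + (n+1)*h = r + n*h + h by ring]
            exact (Finset.sum_Ico_consecutive _ (Nat.le_add_right _ _) (Nat.le_add_right _ _)).symm
          have hinner : ∑ k' ∈ Finset.Ico (r + n*h) (r + n*h + h), b k' ≤ (h:ℝ) * b (r + n*h) := by
            have hcard : (Finset.Ico (r + n*h) (r + n*h + h)).card = h := by
              rw [Nat.card_Ico]; omega
            have := Finset.sum_le_card_nsmul (Finset.Ico (r + n*h) (r + n*h + h)) b (b (r + n*h))
              (fun x hx => by
                rw [Finset.mem_Ico] at hx
                exact hbmono (r + n*h) (hidx n) x hx.1)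
            rw [hcard, nsmul_eq_mul] at this
            exact this
          rw [hsplit, Finset.sum_range_succ]
          linarith
      have hIcoTend : Tendsto (fun n => ∑ k' ∈ Finset.Ico r (r + n*h), b k') atTop atTop := by
        have heq : ∀ n : ℕ, ∑ k' ∈ Finset.Ico r (r + n*h), b k'
            = (∑ k' ∈ Finset.Icc 1 (r + n*h - 1), b k') + -(∑ k' ∈ Finset.Ico 1 r, b k') := by
          intro n
          have h1 : ∑ k' ∈ Finset.Ico 1 (r + n*h), b k'
              = (∑ k' ∈ Finset.Ico 1 r, b k') + ∑ k' ∈ Finset.Ico r (r + n*h), b k' :=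
            (Finset.sum_Ico_consecutive _ hr1 (Nat.le_add_right _ _)).symm
          have h2 : Finset.Icc 1 (r + n*h - 1) = Finset.Ico 1 (r + n*h) := by
            rw [← Finset.Ico_add_one_right_eq_Icc]
            congr 1
            omega
          rw [h2, h1]; ring
        simp_rw [heq]
        apply tendsto_atTop_add_const_right
        apply hbsum.comp
        apply tendsto_atTop_mono (fun n => ?_) tendsto_id
        simp only [id_eq]
        have h0 : n ≤ n*h := Nat.le_mul_of_pos_right n hh1
        have h2 : n + 1 ≤ r + n*h := by
          calc n + 1 = 1 + n := by omega
          _ ≤ r + n*h := Nat.add_le_add hr1 h0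
        exact Nat.le_sub_one_of_lt h2
      have hcast : (0:ℝ) < (h:ℝ) := by exact_mod_cast hh1
      apply tendsto_atTop_mono (fun n => ?_) (Tendsto.atTop_div_const hcast hIcoTend)
      rw [div_le_iff₀ hcast]
      calc ∑ k' ∈ Finset.Ico r (r + n*h), b k' ≤ (h:ℝ) * ∑ j ∈ Finset.range n, b (r + j*h) :=
        hIcoBound n
      _ = (∑ j ∈ Finset.range n, b (r + j*h)) * (h:ℝ) := by ring
    · intro j
      have h1 := hblock (r + j*h) (hidx j)
      have h2 : r + (j+1)*h = (r + j*h) + h := by ring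
      rw [h2]
      exact h1
  exact aux_glue hh1 hres
end
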